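/- arXiv:2204.04092 — 8 statements merged into one kernel-verified Lean document; each statement's English description precedes it below -/
import Mathlib

section
/- (Proposition 2.3, worst-case for number recovery) For every d ≥ 1, integer n ≥ 2, Ω > 0, τ > 0, integer T ≥ 0 and reals 0 < σ < m_min, there exist pairwise distinct triples (a_j, y_j, τ v_j), j = 1,…,n (a_j ∈ ℂ, y_j, v_j ∈ ℝ^d), and pairwise distinct triples (â_j, ŷ_j, τ v̂_j), j = 1,…,n−1, such that |Σ_{j=1}^{n−1} â_j exp(i(ŷ_j + t τ v̂_j)·ω) − Σ_{j=1}^n a_j exp(i(y_j + t τ v_j)·ω)| < σ for all ω ∈ ℝ^d with ‖ω‖₂ ≤ Ω and all t = 0,…,T; moreover min_{1≤j≤n} |a_j| = m_min and, with α_j := (y_j, τ v_j) ∈ ℝ^{2d}, min_{p≠j} ‖α_p − α_j‖₂ = (0.81 e^{−3/2}/Ω) · (σ/m_min)^{1/(2n−2)}. -/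
/-!
Put the `n` spikes at the even points `2jh • e` of a line (`‖e‖ = 1`) with amplitudes
`m * C(2n-2, 2j)` and the `n - 1` spikes at the odd points `(2k+1)h • e` with amplitudes
`m * C(2n-2, 2k+1)`, all with velocity zero, so that every frame sees the same data.
With `z = exp (i h ⟪e, ω⟫)` the difference of the two exponential sums is `-m (1 - z)^(2n-2)`
by the binomial theorem, of modulus at most `m (h ‖ω‖)^(2n-2)`, while the separation is `2h`
and the smallest amplitude is `m`. Taking `2h` equal to the prescribed separation turns the
bound into `(0.405 e^(-3/2))^(2n-2) σ < σ`.
-/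

/-- Concatenation of two vectors of `ℝ^d` into a vector of `ℝ^{2d}`. -/
noncomputable def concatVec {d : ℕ} (y w : EuclideanSpace ℝ (Fin d)) :
    EuclideanSpace ℝ (Fin d ⊕ Fin d) := WithLp.toLp 2 (Sum.elim y w)

open Finset Complex
open scoped InnerProductSpace

theorem Finset.sum_range_two_mul_add_one {M : Type*} [AddCommMonoid M] (f : ℕ → M) (N : ℕ) :
    ∑ j ∈ range (2 * N + 1), f j =
      ∑ i ∈ range (N + 1), f (2 * i) + ∑ i ∈ range N, f (2 * i + 1) := by
  induction N with
  | zero => simp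
  | succ N ih =>
    rw [sum_range_succ (fun i => f (2 * i)), sum_range_succ (fun i => f (2 * i + 1)),
      add_add_add_comm, ← ih, show 2 * (N + 1) = 2 * N + 1 + 1 by ring, sum_range_succ,
      sum_range_succ, add_right_comm, add_assoc]

theorem one_sub_pow_two_mul_eq_sum_even_sub_sum_odd {R : Type*} [CommRing R] (z : R) (N : ℕ) :
    (1 - z) ^ (2 * N) =
      ∑ i ∈ range (N + 1), ((2 * N).choose (2 * i) : R) * z ^ (2 * i) -
        ∑ i ∈ range N, ((2 * N).choose (2 * i + 1) : R) * z ^ (2 * i + 1) := by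
  rw [sub_eq_neg_add, add_pow, sum_range_two_mul_add_one, sub_eq_add_neg, ← sum_neg_distrib]
  congr 1 <;> refine sum_congr rfl fun i _ => ?_ <;> simp [pow_succ, pow_mul] <;> ring

theorem Real.rpow_one_div_two_mul_sub_two_pow {q : ℝ} (hq : 0 ≤ q) {n : ℕ} (hn : 2 ≤ n) :
    (q ^ ((1 : ℝ) / (2 * (n : ℝ) - 2))) ^ (2 * (n - 1)) = q := by
  have : (1 : ℝ) / (2 * (n : ℝ) - 2) = ((2 * (n - 1) : ℕ) : ℝ)⁻¹ := by
    rw [Nat.cast_mul, Nat.cast_sub (by omega)]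
    push_cast
    ring
  rw [this, Real.rpow_inv_natCast_pow hq (by omega)]

theorem mul_mul_pow_lt_of_pow_eq {m σ r ρ : ℝ} {k : ℕ} (hk : k ≠ 0) (hσ : 0 < σ) (hm : 0 < m)
    (hr₀ : 0 ≤ r) (hr₁ : r < 1) (hρ : ρ ^ k = σ / m) : m * (r * ρ) ^ k < σ := by
  rw [mul_pow, hρ, mul_left_comm, mul_div_cancel₀ _ hm.ne']
  exact mul_lt_of_lt_one_left hσ (pow_lt_one₀ hr₀ hr₁ hk)

theorem concatVec_sub_concatVec {d : ℕ} (y y' w w' : EuclideanSpace ℝ (Fin d)) :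
    concatVec y w - concatVec y' w' = concatVec (y - y') (w - w') := by
  ext i
  cases i <;> rfl

theorem norm_concatVec_zero_right {d : ℕ} (y : EuclideanSpace ℝ (Fin d)) :
    ‖concatVec y 0‖ = ‖y‖ := by
  simp [EuclideanSpace.norm_eq, Fintype.sum_sum_type, concatVec]

namespace BinomialGrid

variable {E : Type*} [NormedAddCommGroup E] [InnerProductSpace ℝ E]

noncomputable def amplitude (m : ℝ) (n q : ℕ) : ℂ := m * n.choose q

def point (h : ℝ) (e : E) (q : ℕ) : E := ((q : ℝ) * h) • e

theorem norm_amplitude {m : ℝ} (hm : 0 ≤ m) (n q : ℕ) : ‖amplitude m n q‖ = m * n.choose q := by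
  simp [amplitude, abs_of_nonneg hm]

theorem le_norm_amplitude {m : ℝ} (hm : 0 ≤ m) {n q : ℕ} (hq : q ≤ n) :
    m ≤ ‖amplitude m n q‖ := by
  rw [norm_amplitude hm]
  exact le_mul_of_one_le_right hm (mod_cast Nat.choose_pos hq)

theorem point_injective {h : ℝ} {e : E} (hh : h ≠ 0) (he : e ≠ 0) :
    Function.Injective (point h e) :=
  (smul_left_injective ℝ he).comp ((mul_left_injective₀ hh).comp Nat.cast_injective)

theorem point_two_mul (h : ℝ) (e : E) (q : ℕ) : point h e (2 * q) = point (2 * h) e q := by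
  simp only [point, Nat.cast_mul, Nat.cast_ofNat]
  ring_nf

theorem norm_point_sub_point {h : ℝ} {e : E} (he : ‖e‖ = 1) (p q : ℕ) :
    ‖point h e p - point h e q‖ = |h| * |(p : ℝ) - q| := by
  rw [point, point, ← sub_smul, norm_smul, he, mul_one, ← sub_mul, Real.norm_eq_abs, abs_mul,
    mul_comm]

theorem abs_le_norm_point_sub_point {h : ℝ} {e : E} (he : ‖e‖ = 1) {p q : ℕ} (hpq : p ≠ q) :
    |h| ≤ ‖point h e p - point h e q‖ := by
  rw [norm_point_sub_point he]
  refine le_mul_of_one_le_right (abs_nonneg h) ?_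
  exact_mod_cast Int.one_le_abs (sub_ne_zero.mpr (Int.ofNat_inj.not.mpr hpq))

theorem cexp_I_mul_inner_point (h : ℝ) (e ω : E) (q : ℕ) :
    exp (I * (⟪point h e q, ω⟫_ℝ : ℂ)) = exp (I * ((h * ⟪e, ω⟫_ℝ : ℝ) : ℂ)) ^ q := by
  rw [point, real_inner_smul_left, ← exp_nat_mul]
  push_cast
  ring_nf

theorem sum_odd_sub_sum_even (m h : ℝ) (N : ℕ) (e ω : E) :
    ∑ k : Fin N, amplitude m (2 * N) (2 * k + 1) *
          exp (I * (⟪point h e (2 * k + 1), ω⟫_ℝ : ℂ)) -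
        ∑ j : Fin (N + 1), amplitude m (2 * N) (2 * j) * exp (I * (⟪point h e (2 * j), ω⟫_ℝ : ℂ)) =
      -(m * (1 - exp (I * ((h * ⟪e, ω⟫_ℝ : ℝ) : ℂ))) ^ (2 * N)) := by
  simp only [cexp_I_mul_inner_point, amplitude, mul_assoc, ← mul_sum, ← mul_sub,
    one_sub_pow_two_mul_eq_sum_even_sub_sum_odd]
  rw [Fin.sum_univ_eq_sum_range (fun k => ((2 * N).choose (2 * k + 1) : ℂ) * _ ^ (2 * k + 1)),
    Fin.sum_univ_eq_sum_range (fun k => ((2 * N).choose (2 * k) : ℂ) * _ ^ (2 * k))]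
  ring

theorem norm_sum_odd_sub_sum_even_le {m : ℝ} (hm : 0 ≤ m) (h Ω : ℝ) (N : ℕ) {e ω : E}
    (he : ‖e‖ = 1) (hω : ‖ω‖ ≤ Ω) :
    ‖∑ k : Fin N, amplitude m (2 * N) (2 * k + 1) *
          exp (I * (⟪point h e (2 * k + 1), ω⟫_ℝ : ℂ)) -
        ∑ j : Fin (N + 1), amplitude m (2 * N) (2 * j) *
          exp (I * (⟪point h e (2 * j), ω⟫_ℝ : ℂ))‖ ≤
      m * (|h| * Ω) ^ (2 * N) := by
  rw [sum_odd_sub_sum_even, norm_neg, norm_mul, norm_pow, norm_real, Real.norm_of_nonneg hm,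
    norm_sub_rev]
  gcongr
  calc ‖exp (I * ((h * ⟪e, ω⟫_ℝ : ℝ) : ℂ)) - 1‖ ≤ ‖h * ⟪e, ω⟫_ℝ‖ :=
        Real.norm_exp_I_mul_ofReal_sub_one_le
    _ ≤ |h| * Ω := by
      rw [norm_mul, Real.norm_eq_abs, Real.norm_eq_abs]
      gcongr
      exact (abs_real_inner_le_norm e ω).trans (by rw [he, one_mul]; exact hω)

end BinomialGrid

open BinomialGrid in
theorem worst_case_number_recovery_general
    (d n T : ℕ) (hd : 1 ≤ d) (hn : 2 ≤ n)
    (Ω τ σ mmin : ℝ) (hΩ : 0 < Ω) (hσ0 : 0 < σ) (hσm : σ < mmin) :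
    ∃ (a : Fin n → ℂ) (y v : Fin n → EuclideanSpace ℝ (Fin d))
      (b : Fin (n - 1) → ℂ) (yhat vhat : Fin (n - 1) → EuclideanSpace ℝ (Fin d)),
      -- both families consist of pairwise distinct triples
      Function.Injective (fun j => (a j, y j, τ • v j)) ∧
      Function.Injective (fun j => (b j, yhat j, τ • vhat j)) ∧
      -- the two exponential sums are σ-close on all frames
      (∀ t ≤ T, ∀ ω : EuclideanSpace ℝ (Fin d), ‖ω‖ ≤ Ω →
        ‖((∑ j, b j * Complex.exp (Complex.I *
              ((inner ℝ (yhat j + (t : ℝ) • τ • vhat j) ω : ℝ) : ℂ))) -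
           (∑ j, a j * Complex.exp (Complex.I *
              ((inner ℝ (y j + (t : ℝ) • τ • v j) ω : ℝ) : ℂ))))‖ < σ) ∧
      -- `mmin` is the minimum modulus of the amplitudes `a_j`
      (∀ j, mmin ≤ ‖a j‖) ∧ (∃ j, ‖a j‖ = mmin) ∧
      -- the minimum separation of the `α_j = (y_j, τ v_j)` is exactly the stated value
      (∀ p j, p ≠ j →
        0.81 * Real.exp (-(3 : ℝ) / 2) / Ω * (σ / mmin) ^ ((1 : ℝ) / (2 * (n : ℝ) - 2)) ≤
          ‖concatVec (y p) (τ • v p) - concatVec (y j) (τ • v j)‖) ∧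
      (∃ p j, p ≠ j ∧
        ‖concatVec (y p) (τ • v p) - concatVec (y j) (τ • v j)‖ =
          0.81 * Real.exp (-(3 : ℝ) / 2) / Ω *
            (σ / mmin) ^ ((1 : ℝ) / (2 * (n : ℝ) - 2))) := by
  have hm : 0 < mmin := hσ0.trans hσm
  have hρ := Real.rpow_one_div_two_mul_sub_two_pow (div_pos hσ0 hm).le hn
  obtain ⟨N, rfl⟩ : ∃ N, n = N + 1 := ⟨n - 1, by omega⟩
  set c : ℝ := 0.81 * Real.exp (-(3 : ℝ) / 2)
  set ρ := (σ / mmin) ^ ((1 : ℝ) / (2 * ((N + 1 : ℕ) : ℝ) - 2))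
  set h := c / Ω * ρ / 2
  have hh : 0 < h := by positivity
  have hsep : |2 * h| = c / Ω * ρ := by rw [abs_of_pos (by positivity)]; ring
  have hclose : mmin * (|h| * Ω) ^ (2 * N) < σ := by
    rw [abs_of_pos hh, show h * Ω = c / 2 * ρ by simp only [h]; field_simp]
    have : Real.exp (-(3 : ℝ) / 2) < 1 := Real.exp_lt_one_iff.mpr (by norm_num)
    exact mul_mul_pow_lt_of_pow_eq (by omega) hσ0 hm (by positivity) (by simp only [c]; linarith) hρ
  obtain ⟨e, he⟩ : ∃ e : EuclideanSpace ℝ (Fin d), ‖e‖ = 1 :=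
    ⟨EuclideanSpace.single ⟨0, hd⟩ 1, by simp⟩
  have hpoint := point_injective hh.ne' (norm_ne_zero_iff.mp (he ▸ one_ne_zero))
  refine ⟨fun j => amplitude mmin (2 * N) (2 * j), fun j => point h e (2 * j), 0,
    fun k => amplitude mmin (2 * N) (2 * k + 1), fun k => point h e (2 * k + 1), 0,
    fun i j hij => Fin.ext (by have := hpoint (congrArg (fun p => p.2.1) hij); omega),
    fun i j hij => Fin.ext (by have := hpoint (congrArg (fun p => p.2.1) hij); omega),
    fun t _ ω hω => ?_, fun j => le_norm_amplitude hm.le (by omega),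
    ⟨0, by simp [norm_amplitude hm.le]⟩, fun p j hpj => ?_,
    ⟨⟨1, by omega⟩, 0, by simp [Fin.ext_iff], ?_⟩⟩
  · simp only [Pi.zero_apply, smul_zero, add_zero]
    exact (norm_sum_odd_sub_sum_even_le hm.le h Ω N he hω).trans_lt hclose
  all_goals simp only [Pi.zero_apply, concatVec_sub_concatVec, sub_self,
    norm_concatVec_zero_right, point_two_mul]
  · exact hsep ▸ abs_le_norm_point_sub_point he (Fin.val_ne_of_ne hpj)
  · simp [norm_point_sub_point he, hsep]

/-- Proposition 2.3: worst-case example for number recovery of location–velocity pairs. -/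
theorem worst_case_number_recovery
    (d n T : ℕ) (hd : 1 ≤ d) (hn : 2 ≤ n)
    (Ω τ σ mmin : ℝ) (hΩ : 0 < Ω) (hτ : 0 < τ) (hσ0 : 0 < σ) (hσm : σ < mmin) :
    ∃ (a : Fin n → ℂ) (y v : Fin n → EuclideanSpace ℝ (Fin d))
      (b : Fin (n - 1) → ℂ) (yhat vhat : Fin (n - 1) → EuclideanSpace ℝ (Fin d)),
      -- both families consist of pairwise distinct triples
      Function.Injective (fun j => (a j, y j, τ • v j)) ∧
      Function.Injective (fun j => (b j, yhat j, τ • vhat j)) ∧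
      -- the two exponential sums are σ-close on all frames
      (∀ t ≤ T, ∀ ω : EuclideanSpace ℝ (Fin d), ‖ω‖ ≤ Ω →
        ‖((∑ j, b j * Complex.exp (Complex.I *
              ((inner ℝ (yhat j + (t : ℝ) • τ • vhat j) ω : ℝ) : ℂ))) -
           (∑ j, a j * Complex.exp (Complex.I *
              ((inner ℝ (y j + (t : ℝ) • τ • v j) ω : ℝ) : ℂ))))‖ < σ) ∧
      -- `mmin` is the minimum modulus of the amplitudes `a_j`
      (∀ j, mmin ≤ ‖a j‖) ∧ (∃ j, ‖a j‖ = mmin) ∧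
      -- the minimum separation of the `α_j = (y_j, τ v_j)` is exactly the stated value
      (∀ p j, p ≠ j →
        0.81 * Real.exp (-(3 : ℝ) / 2) / Ω * (σ / mmin) ^ ((1 : ℝ) / (2 * (n : ℝ) - 2)) ≤
          ‖concatVec (y p) (τ • v p) - concatVec (y j) (τ • v j)‖) ∧
      (∃ p j, p ≠ j ∧
        ‖concatVec (y p) (τ • v p) - concatVec (y j) (τ • v j)‖ =
          0.81 * Real.exp (-(3 : ℝ) / 2) / Ω *
            (σ / mmin) ^ ((1 : ℝ) / (2 * (n : ℝ) - 2))) :=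
  worst_case_number_recovery_general d n T hd hn Ω τ σ mmin hΩ hσ0 hσm
end

section
/- (Proposition 2.4, worst-case for number recovery with distinct velocities) For every d ≥ 1, integer n ≥ 2, Ω > 0, τ > 0, integer T ≥ 0 and reals 0 < σ < m_min, there exist pairwise distinct triples (a_j, y_j, τ v_j), j = 1,…,n, whose velocities v_j are pairwise distinct, and pairwise distinct triples (â_j, ŷ_j, τ v̂_j), j = 1,…,n−1, such that |Σ_{j=1}^{n−1} â_j exp(i(ŷ_j + t τ v̂_j)·ω) − Σ_{j=1}^n a_j exp(i(y_j + t τ v_j)·ω)| < σ for all ‖ω‖₂ ≤ Ω and all t = 0,…,T; moreover min_{1≤j≤n} |a_j| = m_min and, with α_j := (y_j, τ v_j) ∈ ℝ^{2d}, min_{p≠j} ‖α_p − α_j‖₂ = (0.81 √2 e^{−3/2}/((T+1)Ω)) · (σ/m_min)^{1/(2n−2)}. -/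
open Finset Complex

theorem sum_even_sub_sum_odd_eq_alternating_sum {M : Type*} [AddCommGroup M] (f : ℕ → M) (N : ℕ) :
    ∑ j : Fin (N + 1), f (2 * j) - ∑ j : Fin N, f (2 * j + 1) =
      ∑ k ∈ range (2 * N + 1), (-1 : ℤ) ^ k • f k := by
  rw [Fin.sum_univ_eq_sum_range (fun j => f (2 * j)),
    Fin.sum_univ_eq_sum_range (fun j => f (2 * j + 1))]
  induction N with
  | zero => simp
  | succ N ih =>
    rw [show 2 * (N + 1) + 1 = 2 * N + 1 + 1 + 1 by ring, sum_range_succ _ (2 * N + 1 + 1),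
      sum_range_succ _ (2 * N + 1), ← ih, sum_range_succ (fun j => f (2 * j)) (N + 1),
      sum_range_succ (fun j => f (2 * j + 1)) N, show 2 * (N + 1) = 2 * N + 1 + 1 by ring]
    rw [Odd.neg_one_pow ⟨N, rfl⟩, Even.neg_one_pow ⟨N + 1, by ring⟩, neg_one_smul, one_smul]
    abel

theorem sum_odd_sub_sum_even_choose_mul_pow {R : Type*} [CommRing R] (N : ℕ) (z : R) :
    ∑ j : Fin N, ((2 * N).choose (2 * j + 1) : R) * z ^ (2 * (j : ℕ) + 1) -
      ∑ j : Fin (N + 1), ((2 * N).choose (2 * j) : R) * z ^ (2 * (j : ℕ)) = -(1 - z) ^ (2 * N) := by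
  rw [← neg_sub, sum_even_sub_sum_odd_eq_alternating_sum (fun k => ((2 * N).choose k : R) * z ^ k),
    sub_eq_neg_add, add_pow]
  congr 1
  refine sum_congr rfl fun k _ => ?_
  rw [zsmul_eq_mul, one_pow, mul_one]
  push_cast
  ring

theorem norm_concatVec_sub_concatVec_left {d : ℕ} (y u u' : EuclideanSpace ℝ (Fin d)) :
    ‖concatVec y u - concatVec y u'‖ = ‖u - u'‖ := by
  simp only [EuclideanSpace.norm_eq, concatVec, Fintype.sum_sum_type]
  simp

theorem mul_pow_lt_of_lt_rpow_inv {K : ℕ} (hK : K ≠ 0) {μ σ ρ : ℝ} (hμ : 0 < μ) (hσ : 0 < σ)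
    (hρ : 0 ≤ ρ) (hρσ : ρ < (σ / μ) ^ (K : ℝ)⁻¹) : μ * ρ ^ K < σ := by
  have := pow_lt_pow_left₀ hρσ hρ hK
  rwa [Real.rpow_inv_natCast_pow (div_pos hσ hμ).le hK, lt_div_iff₀' hμ] at this

section LinePoint

variable {E : Type*} [NormedAddCommGroup E] [InnerProductSpace ℝ E]

noncomputable def linePoint (e : E) (s : ℝ) (k : ℕ) : E := ((k : ℝ) * s) • e

theorem norm_linePoint_sub {e : E} (he : ‖e‖ = 1) {s : ℝ} (hs : 0 ≤ s) (k l : ℕ) :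
    ‖linePoint e s k - linePoint e s l‖ = |(k : ℝ) - l| * s := by
  rw [linePoint, linePoint, ← sub_smul, ← sub_mul, norm_smul, he, Real.norm_eq_abs, abs_mul,
    abs_of_nonneg hs, mul_one]

theorem linePoint_injective {e : E} (he : ‖e‖ = 1) {s : ℝ} (hs : 0 < s) :
    Function.Injective (linePoint e s) := fun k l h => by
  have := norm_linePoint_sub he hs.le k l
  rw [h, sub_self, norm_zero, eq_comm, mul_eq_zero, abs_eq_zero, sub_eq_zero] at this
  exact_mod_cast this.resolve_right hs.ne'

theorem cexp_I_mul_inner_smul_linePoint (e ω : E) (s t : ℝ) (k : ℕ) :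
    cexp (I * (inner ℝ (t • linePoint e s k) ω : ℝ)) =
      cexp (I * (t * s * inner ℝ e ω : ℝ)) ^ k := by
  rw [← Complex.exp_nat_mul, linePoint, smul_smul, real_inner_smul_left]
  push_cast
  ring_nf

theorem norm_sum_odd_sub_sum_even_linePoint_le (e ω : E) (s t μ : ℝ) (N : ℕ) :
    ‖∑ j : Fin N, (μ : ℂ) * (2 * N).choose (2 * j + 1) *
          cexp (I * (inner ℝ (t • linePoint e s (2 * j + 1)) ω : ℝ)) -
        ∑ j : Fin (N + 1), (μ : ℂ) * (2 * N).choose (2 * j) *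
          cexp (I * (inner ℝ (t • linePoint e s (2 * j)) ω : ℝ))‖ ≤
      |μ| * |t * s * inner ℝ e ω| ^ (2 * N) := by
  simp only [cexp_I_mul_inner_smul_linePoint, mul_assoc, ← mul_sum, ← mul_sub,
    sum_odd_sub_sum_even_choose_mul_pow, norm_mul, norm_neg, norm_pow, norm_real, Real.norm_eq_abs]
  gcongr
  rw [norm_sub_rev, ← Real.norm_eq_abs]
  simpa only [mul_assoc] using Real.norm_exp_I_mul_ofReal_sub_one_le (x := t * s * inner ℝ e ω)

theorem norm_sum_odd_sub_sum_even_linePoint_lt {e : E} (he : ‖e‖ = 1) {N : ℕ} (hN : N ≠ 0)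
    {μ σ s t Ω : ℝ} (hμ : 0 < μ) (hσ : 0 < σ) (hs : 0 ≤ s) (ht : 0 ≤ t) {ω : E} (hω : ‖ω‖ ≤ Ω)
    (hΩ : t * s * Ω < (σ / μ) ^ ((2 * N : ℕ) : ℝ)⁻¹) :
    ‖∑ j : Fin N, (μ : ℂ) * (2 * N).choose (2 * j + 1) *
          cexp (I * (inner ℝ (t • linePoint e s (2 * j + 1)) ω : ℝ)) -
        ∑ j : Fin (N + 1), (μ : ℂ) * (2 * N).choose (2 * j) *
          cexp (I * (inner ℝ (t • linePoint e s (2 * j)) ω : ℝ))‖ < σ := by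
  refine (norm_sum_odd_sub_sum_even_linePoint_le e ω s t μ N).trans_lt ?_
  rw [abs_of_pos hμ]
  refine mul_pow_lt_of_lt_rpow_inv (by omega) hμ hσ (abs_nonneg _) (lt_of_le_of_lt ?_ hΩ)
  rw [abs_mul, abs_of_nonneg (by positivity)]
  gcongr
  exact (abs_real_inner_le_norm e ω).trans (by rwa [he, one_mul])

end LinePoint

theorem separation_constant_lt_two : 0.81 * √2 * Real.exp (-(3 : ℝ) / 2) < 2 :=
  calc 0.81 * √2 * Real.exp (-(3 : ℝ) / 2) < 0.81 * 2 * 1 := by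
        gcongr
        · rw [Real.sqrt_lt' two_pos]; norm_num
        · rw [Real.exp_lt_one_iff]; norm_num
    _ < 2 := by norm_num

/-- Proposition 2.4: worst-case example for number recovery with pairwise
distinct velocities. -/
theorem worst_case_number_recovery_distinct_velocities
    (d n T : ℕ) (hd : 1 ≤ d) (hn : 2 ≤ n)
    (Ω τ σ mmin : ℝ) (hΩ : 0 < Ω) (hτ : 0 < τ) (hσ0 : 0 < σ) (hσm : σ < mmin) :
    ∃ (a : Fin n → ℂ) (y v : Fin n → EuclideanSpace ℝ (Fin d))
      (b : Fin (n - 1) → ℂ) (yhat vhat : Fin (n - 1) → EuclideanSpace ℝ (Fin d)),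
      -- both families consist of pairwise distinct triples
      Function.Injective (fun j => (a j, y j, τ • v j)) ∧
      Function.Injective (fun j => (b j, yhat j, τ • vhat j)) ∧
      -- the velocities are pairwise distinct
      Function.Injective v ∧
      -- the two exponential sums are σ-close on all frames
      (∀ t ≤ T, ∀ ω : EuclideanSpace ℝ (Fin d), ‖ω‖ ≤ Ω →
        ‖((∑ j, b j * Complex.exp (Complex.I *
              ((inner ℝ (yhat j + (t : ℝ) • τ • vhat j) ω : ℝ) : ℂ))) -
           (∑ j, a j * Complex.exp (Complex.I *
              ((inner ℝ (y j + (t : ℝ) • τ • v j) ω : ℝ) : ℂ))))‖ < σ) ∧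
      -- `mmin` is the minimum modulus of the amplitudes `a_j`
      (∀ j, mmin ≤ ‖a j‖) ∧ (∃ j, ‖a j‖ = mmin) ∧
      -- the minimum separation of the `α_j = (y_j, τ v_j)` is exactly the stated value
      (∀ p j, p ≠ j →
        0.81 * Real.sqrt 2 * Real.exp (-(3 : ℝ) / 2) / (((T : ℝ) + 1) * Ω) *
            (σ / mmin) ^ ((1 : ℝ) / (2 * (n : ℝ) - 2)) ≤
          ‖concatVec (y p) (τ • v p) - concatVec (y j) (τ • v j)‖) ∧
      (∃ p j, p ≠ j ∧
        ‖concatVec (y p) (τ • v p) - concatVec (y j) (τ • v j)‖ =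
          0.81 * Real.sqrt 2 * Real.exp (-(3 : ℝ) / 2) / (((T : ℝ) + 1) * Ω) *
            (σ / mmin) ^ ((1 : ℝ) / (2 * (n : ℝ) - 2))) := by
  obtain ⟨N, rfl⟩ : ∃ N, n = N + 1 := ⟨n - 1, by omega⟩
  have hmmin : 0 < mmin := hσ0.trans hσm
  set C : ℝ := 0.81 * Real.sqrt 2 * Real.exp (-(3 : ℝ) / 2)
  have hC2 : C < 2 := separation_constant_lt_two
  set r := (σ / mmin) ^ ((1 : ℝ) / (2 * ((N + 1 : ℕ) : ℝ) - 2)) with hr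
  have hr' : r = (σ / mmin) ^ ((2 * N : ℕ) : ℝ)⁻¹ := by rw [hr]; congr 1; push_cast; ring
  set δ := C / (((T : ℝ) + 1) * Ω) * r with hδ
  have hδ0 : 0 < δ := by positivity
  set e : EuclideanSpace ℝ (Fin d) := EuclideanSpace.single ⟨0, hd⟩ 1
  have he : ‖e‖ = 1 := by simp [e]
  set x := linePoint e (δ / 2)
  have hx : Function.Injective x := linePoint_injective he (by positivity)
  have hτx (k : ℕ) : τ • τ⁻¹ • x k = x k := smul_inv_smul₀ hτ.ne' _
  have hdist (k l : ℕ) : ‖x (2 * k) - x (2 * l)‖ = |(k : ℝ) - l| * δ := by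
    rw [norm_linePoint_sub he (by positivity)]; push_cast; rw [← mul_sub, abs_mul]; simp; ring
  have hev : Function.Injective fun j : Fin (N + 1) => x (2 * j) :=
    hx.comp (f := fun j : Fin (N + 1) => 2 * (j : ℕ)) fun _ _ h => Fin.ext (by simp at h; omega)
  have hodd : Function.Injective fun j : Fin N => x (2 * j + 1) :=
    hx.comp (f := fun j : Fin N => 2 * (j : ℕ) + 1) fun _ _ h => Fin.ext (by simp at h; omega)
  refine ⟨fun j => mmin * (2 * N).choose (2 * j), 0, fun j => τ⁻¹ • x (2 * j),
    fun j => mmin * (2 * N).choose (2 * j + 1), 0, fun j => τ⁻¹ • x (2 * j + 1),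
    ?_, ?_, ?_, ?_, ?_, ?_, ?_, ?_⟩
  · exact .of_comp (f := fun p => p.2.2) (by simpa only [Function.comp_def, hτx] using hev)
  · exact .of_comp (f := fun p => p.2.2) (by simp only [Function.comp_def, hτx]; exact hodd)
  · exact (smul_right_injective _ (inv_ne_zero hτ.ne')).comp hev
  · intro t ht ω hω
    simp only [Pi.zero_apply, zero_add, hτx]
    refine norm_sum_odd_sub_sum_even_linePoint_lt he (by omega) hmmin hσ0 (by positivity)
      t.cast_nonneg hω ?_
    calc (t : ℝ) * (δ / 2) * Ω ≤ (T + 1) * (δ / 2) * Ω := by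
          gcongr; exact_mod_cast ht.trans T.le_succ
      _ = C / 2 * r := by rw [hδ]; field_simp
      _ < r := (mul_lt_iff_lt_one_left (by positivity)).2 (by linarith)
      _ = _ := hr'
  · intro j
    rw [norm_mul, Complex.norm_real, Complex.norm_natCast, Real.norm_of_nonneg hmmin.le]
    exact le_mul_of_one_le_right hmmin.le (by exact_mod_cast Nat.choose_pos (by omega))
  · exact ⟨0, by simp [hmmin.le]⟩
  · intro p j hpj
    simp only [Pi.zero_apply, hτx, norm_concatVec_sub_concatVec_left, hdist]
    have : (1 : ℤ) ≤ |(p : ℤ) - j| := Int.one_le_abs (by omega)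
    exact le_mul_of_one_le_left hδ0.le (by exact_mod_cast this)
  · refine ⟨⟨1, by omega⟩, ⟨0, by omega⟩, by simp, ?_⟩
    simpa [hτx, norm_concatVec_sub_concatVec_left] using hdist 1 0
end

section
/- (Proposition 2.7, worst-case for location–velocity recovery with equal velocities) For every d ≥ 1, integer n ≥ 2, Ω > 0, τ > 0, integer T ≥ 0 and reals 0 < σ < m_min, set Δ := (0.49 e^{−3/2}/Ω) · (σ/m_min)^{1/(2n−1)}. Then there exist amplitudes a_1,…,a_n, â_1,…,â_n ∈ ℂ and a common velocity v ∈ ℝ^d such that, with locations y_j := (−jΔ, 0, …, 0) ∈ ℝ^d and ŷ_j := ((j−1)Δ, 0, …, 0) ∈ ℝ^d for j = 1,…,n and all velocities equal to v, one has |Σ_{j=1}^n â_j exp(i(ŷ_j + t τ v)·ω) − Σ_{j=1}^n a_j exp(i(y_j + t τ v)·ω)| < σ for all ω ∈ ℝ^d with ‖ω‖₂ ≤ Ω and all t = 0,…,T; moreover either min_{1≤j≤n}|a_j| = m_min or min_{1≤j≤n}|â_j| = m_min. -/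
/-!
Take all velocities zero and put `z = exp (i Δ ω₁)`, with `ω₁` the first coordinate of `ω`. The
two exponential sums become `∑ âⱼ zʲ` and `∑ aⱼ z^(-(j+1))`. Choosing `âⱼ` and `-aⱼ` to be `m_min`
times the coefficients of `z^(n+j)` and `z^(n-1-j)` in `(z - 1)^(2n-1)` makes their difference
`m_min z^(-n) (z - 1)^(2n-1)`, of modulus `m_min |z - 1|^(2n-1) ≤ m_min (ΔΩ)^(2n-1)
= (0.49 e^(-3/2))^(2n-1) σ < σ`. All `|aⱼ|` are at least `m_min`, with equality for the
coefficient `C(2n-1, 0) = 1`.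
-/

open Complex Finset

def subOnePowCoeff (K : Type*) [Ring K] (m k : ℕ) : K := (-1) ^ (k + m) * m.choose k

lemma sub_one_pow_eq_sum_subOnePowCoeff {K : Type*} [CommRing K] (z : K) (m : ℕ) :
    (z - 1) ^ m = ∑ k ∈ range (m + 1), subOnePowCoeff K m k * z ^ k := by
  rw [sub_pow]
  refine sum_congr rfl fun k _ => ?_
  rw [subOnePowCoeff, one_pow]
  ring

lemma sub_one_pow_two_mul_sub_one_eq {K : Type*} [Field K] {n : ℕ} (hn : n ≠ 0) {z : K}
    (hz : z ≠ 0) :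
    (z - 1) ^ (2 * n - 1) = z ^ n *
      (∑ j : Fin n, subOnePowCoeff K (2 * n - 1) (n + j) * z ^ (j : ℕ) +
        ∑ j : Fin n, subOnePowCoeff K (2 * n - 1) (n - 1 - j) * (z ^ ((j : ℕ) + 1))⁻¹) := by
  have hsplit : ∀ j : Fin n, z ^ n = z ^ (n - 1 - j) * z ^ ((j : ℕ) + 1) := fun j => by
    rw [← pow_add]; congr 1; omega
  rw [sub_one_pow_eq_sum_subOnePowCoeff, show 2 * n - 1 + 1 = n + n by omega, sum_range_add,
    ← sum_range_reflect, mul_add, add_comm, mul_sum, mul_sum]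
  congr 1
  · rw [← Fin.sum_univ_eq_sum_range
      (fun k => subOnePowCoeff K (2 * n - 1) (n + k) * z ^ (n + k))]
    exact sum_congr rfl fun j _ => by rw [pow_add]; ring
  · rw [← Fin.sum_univ_eq_sum_range
      (fun k => subOnePowCoeff K (2 * n - 1) (n - 1 - k) * z ^ (n - 1 - k))]
    refine sum_congr rfl fun j _ => ?_
    rw [hsplit j]
    field_simp

lemma norm_subOnePowCoeff (m k : ℕ) : ‖subOnePowCoeff ℂ m k‖ = m.choose k := by
  simp [subOnePowCoeff]

section Amplitudes

variable (mmin : ℝ) (n : ℕ)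

def worstCaseAmp (j : Fin n) : ℂ := -(mmin * subOnePowCoeff ℂ (2 * n - 1) (n - 1 - j))

def worstCaseAmpHat (j : Fin n) : ℂ := mmin * subOnePowCoeff ℂ (2 * n - 1) (n + j)

variable {mmin n}

lemma le_norm_worstCaseAmp (hmin : 0 ≤ mmin) (j : Fin n) : mmin ≤ ‖worstCaseAmp mmin n j‖ := by
  have hchoose : (1 : ℝ) ≤ (2 * n - 1).choose (n - 1 - j) := by
    exact_mod_cast Nat.choose_pos (by omega)
  rw [worstCaseAmp, norm_neg, norm_mul, norm_subOnePowCoeff, norm_real, Real.norm_of_nonneg hmin]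
  exact le_mul_of_one_le_right hmin hchoose

lemma norm_worstCaseAmp_last (hmin : 0 ≤ mmin) (hn : n ≠ 0) :
    ‖worstCaseAmp mmin n ⟨n - 1, by omega⟩‖ = mmin := by
  simp [worstCaseAmp, norm_subOnePowCoeff, hmin]

lemma norm_sum_worstCaseAmpHat_sub_sum_worstCaseAmp (hmin : 0 ≤ mmin) (hn : n ≠ 0) (θ : ℝ) :
    ‖∑ j, worstCaseAmpHat mmin n j * exp (I * ((j * θ : ℝ) : ℂ)) -
        ∑ j, worstCaseAmp mmin n j * exp (I * ((-((j : ℝ) + 1) * θ : ℝ) : ℂ))‖ =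
      mmin * ‖exp (I * θ) - 1‖ ^ (2 * n - 1) := by
  set u := exp (I * θ) with hu_def
  have hu : ∀ k : ℕ, exp (I * ((k * θ : ℝ) : ℂ)) = u ^ k := fun k => by
    rw [← exp_nat_mul]; push_cast; ring_nf
  have hu' : ∀ k : ℕ, exp (I * ((-((k : ℝ) + 1) * θ : ℝ) : ℂ)) = (u ^ (k + 1))⁻¹ := fun k => by
    rw [← exp_nat_mul, ← exp_neg]; push_cast; ring_nf
  have hu0 : u ≠ 0 := exp_ne_zero _
  have hsum : ∑ j, worstCaseAmpHat mmin n j * u ^ (j : ℕ) -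
      ∑ j, worstCaseAmp mmin n j * (u ^ ((j : ℕ) + 1))⁻¹ =
        mmin * (u ^ n)⁻¹ * (u - 1) ^ (2 * n - 1) := by
    rw [sub_one_pow_two_mul_sub_one_eq hn hu0, ← mul_assoc, mul_assoc (mmin : ℂ),
      inv_mul_cancel₀ (pow_ne_zero n hu0), mul_one]
    simp only [worstCaseAmp, worstCaseAmpHat, neg_mul, sum_neg_distrib, sub_neg_eq_add,
      mul_add, mul_sum, mul_assoc]
  simp only [hu, hu', hsum]
  simp [hu_def, norm_exp_I_mul_ofReal, hmin]

end Amplitudes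

def firstAxis (d : ℕ) : EuclideanSpace ℝ (Fin d) :=
  WithLp.toLp 2 fun i => if (i : ℕ) = 0 then 1 else 0

lemma toLp_ite_eq_smul_firstAxis {d : ℕ} (c : ℝ) :
    WithLp.toLp 2 (fun i : Fin d => if (i : ℕ) = 0 then c else 0) = c • firstAxis d := by
  ext i
  simp [firstAxis]

lemma norm_firstAxis_le_one (d : ℕ) : ‖firstAxis d‖ ≤ 1 := by
  cases d with
  | zero => simp [Subsingleton.elim (firstAxis 0) 0]
  | succ d =>
    have : firstAxis (d + 1) = PiLp.single 2 0 1 := by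
      ext i
      simp only [PiLp.single_apply, firstAxis, Fin.ext_iff, Fin.val_zero]
    simp [this, PiLp.norm_single]

lemma abs_inner_firstAxis_le {d : ℕ} (ω : EuclideanSpace ℝ (Fin d)) :
    |inner ℝ (firstAxis d) ω| ≤ ‖ω‖ :=
  (abs_real_inner_le_norm _ _).trans <|
    mul_le_of_le_one_left (norm_nonneg _) (norm_firstAxis_le_one d)

lemma rpow_one_div_two_mul_sub_one_pow {x : ℝ} (hx : 0 ≤ x) {n : ℕ} (hn : n ≠ 0) :
    (x ^ (1 / (2 * (n : ℝ) - 1))) ^ (2 * n - 1) = x := by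
  have hcast : ((2 * n - 1 : ℕ) : ℝ) = 2 * (n : ℝ) - 1 := by
    rw [Nat.cast_sub (by omega)]; push_cast; ring
  rw [one_div, ← hcast, Real.rpow_inv_natCast_pow hx (by omega)]

lemma mul_pow_mul_rpow_one_div_two_mul_sub_one_lt {c σ mmin : ℝ} (hc0 : 0 ≤ c) (hc1 : c < 1)
    (hσ : 0 < σ) (hmin : 0 < mmin) {n : ℕ} (hn : n ≠ 0) :
    mmin * (c * (σ / mmin) ^ (1 / (2 * (n : ℝ) - 1))) ^ (2 * n - 1) < σ := by
  rw [mul_pow, rpow_one_div_two_mul_sub_one_pow (by positivity) hn, mul_left_comm,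
    mul_div_cancel₀ σ hmin.ne']
  exact mul_lt_of_lt_one_left hσ (pow_lt_one₀ hc0 hc1 (by omega))

theorem worst_case_location_velocity_recovery_equal_velocities_general
    (d n T : ℕ) (hn : 2 ≤ n)
    (Ω τ σ mmin : ℝ) (hΩ : 0 < Ω) (hσ0 : 0 < σ) (hσm : σ < mmin) :
    ∃ (a ahat : Fin n → ℂ) (v : EuclideanSpace ℝ (Fin d)),
      letI Δ : ℝ :=
        0.49 * Real.exp (-(3 : ℝ) / 2) / Ω * (σ / mmin) ^ ((1 : ℝ) / (2 * (n : ℝ) - 1))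
      letI y : Fin n → EuclideanSpace ℝ (Fin d) :=
        fun j => WithLp.toLp 2 (fun i : Fin d => if (i : ℕ) = 0 then -(((j : ℕ) : ℝ) + 1) * Δ else 0)
      letI yhat : Fin n → EuclideanSpace ℝ (Fin d) :=
        fun j => WithLp.toLp 2 (fun i : Fin d => if (i : ℕ) = 0 then ((j : ℕ) : ℝ) * Δ else 0)
      (∀ t ≤ T, ∀ ω : EuclideanSpace ℝ (Fin d), ‖ω‖ ≤ Ω →
        norm
          ((∑ j, ahat j * Complex.exp (Complex.I *
              ((inner ℝ (yhat j + (t : ℝ) • τ • v) ω : ℝ) : ℂ))) -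
           (∑ j, a j * Complex.exp (Complex.I *
              ((inner ℝ (y j + (t : ℝ) • τ • v) ω : ℝ) : ℂ)))) < σ) ∧
      (((∀ j, mmin ≤ norm (a j)) ∧ (∃ j, norm (a j) = mmin)) ∨
       ((∀ j, mmin ≤ norm (ahat j)) ∧ (∃ j, norm (ahat j) = mmin))) := by
  have hmin : 0 < mmin := hσ0.trans hσm
  have hn0 : n ≠ 0 := by omega
  refine ⟨worstCaseAmp mmin n, worstCaseAmpHat mmin n, 0, ?_,
    Or.inl ⟨le_norm_worstCaseAmp hmin.le, _, norm_worstCaseAmp_last hmin.le hn0⟩⟩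
  intro t _ ω hω
  set c : ℝ := 0.49 * Real.exp (-(3 : ℝ) / 2)
  set r : ℝ := (σ / mmin) ^ ((1 : ℝ) / (2 * (n : ℝ) - 1))
  set Δ := c / Ω * r
  set θ := inner ℝ (firstAxis d) ω
  have hc0 : 0 ≤ c := by positivity
  have hc1 : c < 1 := by
    have : Real.exp (-(3 : ℝ) / 2) < 1 := Real.exp_lt_one_iff.2 (by norm_num)
    simp only [c]
    linarith
  have hΔ0 : 0 ≤ Δ := by positivity
  simp only [smul_zero, add_zero, toLp_ite_eq_smul_firstAxis, real_inner_smul_left,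
    mul_assoc, norm_sum_worstCaseAmpHat_sub_sum_worstCaseAmp hmin.le hn0]
  calc mmin * ‖exp (I * (Δ * θ : ℝ)) - 1‖ ^ (2 * n - 1)
      ≤ mmin * (c * r) ^ (2 * n - 1) := by
        gcongr
        calc _ ≤ ‖Δ * θ‖ := Real.norm_exp_I_mul_ofReal_sub_one_le
          _ = Δ * |θ| := by rw [Real.norm_eq_abs, abs_mul, abs_of_nonneg hΔ0]
          _ ≤ Δ * Ω := by gcongr; exact (abs_inner_firstAxis_le ω).trans hω
          _ = c * r := by simp only [Δ]; field_simp
    _ < σ := mul_pow_mul_rpow_one_div_two_mul_sub_one_lt hc0 hc1 hσ0 hmin hn0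

/-- Proposition 2.7: worst-case example for location–velocity recovery with
equal velocities. -/
theorem worst_case_location_velocity_recovery_equal_velocities
    (d n T : ℕ) (hd : 1 ≤ d) (hn : 2 ≤ n)
    (Ω τ σ mmin : ℝ) (hΩ : 0 < Ω) (hτ : 0 < τ) (hσ0 : 0 < σ) (hσm : σ < mmin) :
    ∃ (a ahat : Fin n → ℂ) (v : EuclideanSpace ℝ (Fin d)),
      letI Δ : ℝ :=
        0.49 * Real.exp (-(3 : ℝ) / 2) / Ω * (σ / mmin) ^ ((1 : ℝ) / (2 * (n : ℝ) - 1))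
      letI y : Fin n → EuclideanSpace ℝ (Fin d) :=
        fun j => WithLp.toLp 2 (fun i : Fin d => if (i : ℕ) = 0 then -(((j : ℕ) : ℝ) + 1) * Δ else 0)
      letI yhat : Fin n → EuclideanSpace ℝ (Fin d) :=
        fun j => WithLp.toLp 2 (fun i : Fin d => if (i : ℕ) = 0 then ((j : ℕ) : ℝ) * Δ else 0)
      (∀ t ≤ T, ∀ ω : EuclideanSpace ℝ (Fin d), ‖ω‖ ≤ Ω →
        norm
          ((∑ j, ahat j * Complex.exp (Complex.I *
              ((inner ℝ (yhat j + (t : ℝ) • τ • v) ω : ℝ) : ℂ))) -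
           (∑ j, a j * Complex.exp (Complex.I *
              ((inner ℝ (y j + (t : ℝ) • τ • v) ω : ℝ) : ℂ)))) < σ) ∧
      (((∀ j, mmin ≤ norm (a j)) ∧ (∃ j, norm (a j) = mmin)) ∨
       ((∀ j, mmin ≤ norm (ahat j)) ∧ (∃ j, norm (ahat j) = mmin))) :=
  worst_case_location_velocity_recovery_equal_velocities_general d n T hn Ω τ σ mmin hΩ hσ0 hσm
end

section
/- (Proposition 2.8, worst-case for location–velocity recovery with a long time window) For every d ≥ 1, integer n ≥ 2, Ω > 0, τ > 0, integer T ≥ 0 and reals 0 < σ < m_min, set Δ := (0.49 e^{−3/2}/((T+1)Ω)) · (σ/m_min)^{1/(2n−1)}. Then there exist amplitudes a_1,…,a_n, â_1,…,â_n ∈ ℂ such that, with concatenated location–velocity vectors α̂_j := (ŷ_j, τ v̂_j) = −(jΔ/√d)·(1,1,…,1) ∈ ℝ^{2d} for j = 1,…,n, and α_1 := (y_1, τ v_1) = 0, α_j := (y_j, τ v_j) = ((j−1)Δ/√d)·(1,1,…,1) ∈ ℝ^{2d} for j = 2,…,n (where (1,…,1) is the all-ones vector of ℝ^{2d}), one has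 |Σ_{j=1}^n â_j exp(i(ŷ_j + t τ v̂_j)·ω) − Σ_{j=1}^n a_j exp(i(y_j + t τ v_j)·ω)| < σ for all ω ∈ ℝ^d with ‖ω‖₂ ≤ Ω and all t = 0,…,T; moreover either min_{1≤j≤n}|a_j| = m_min or min_{1≤j≤n}|â_j| = m_min. -/
/-!
Both signals are supported on one line through the origin, so at time `t` and frequency `ω`
they only see the phase `s = (1 + t)(Δ/√d) ∑ₖ ωₖ`, with `|s| ≤ (T + 1) Ω Δ`. Take the
amplitudes from the binomial expansion of `m_min (1 - z)^(2n-1)`: the coefficients of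
`z^0, …, z^(n-1)` go to the `n` nodes `α̂_j` and minus those of `z^n, …, z^(2n-1)` to the
nodes `α_j`. After the unimodular factor `e^{ins}` the difference of the two signals is
`m_min (1 - e^{is})^(2n-1)`, of modulus at most `m_min |s|^(2n-1) ≤ (0.49 e^{-3/2})^(2n-1) σ < σ`,
while the smallest amplitude is `m_min` times the binomial coefficient `1`.
-/

open Finset Complex

def oneSubPowCoeff (N k : ℕ) : ℂ := (-1) ^ k * N.choose k

lemma sum_oneSubPowCoeff_mul_pow (N : ℕ) (z : ℂ) :
    ∑ k ∈ range (N + 1), oneSubPowCoeff N k * z ^ k = (1 - z) ^ N := by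
  rw [sub_eq_neg_add, add_pow]
  refine sum_congr rfl fun k _ => ?_
  rw [oneSubPowCoeff, neg_pow, one_pow, mul_one]
  ring

lemma norm_oneSubPowCoeff (N k : ℕ) : ‖oneSubPowCoeff N k‖ = N.choose k := by
  simp [oneSubPowCoeff]

lemma sum_fin_reflect_add_sum_fin_add {M : Type*} [AddCommMonoid M] (f : ℕ → M) (n : ℕ) :
    ∑ j : Fin n, f (n - 1 - j) + ∑ j : Fin n, f (n + j) = ∑ k ∈ range (2 * n), f k := by
  rw [Fin.sum_univ_eq_sum_range (fun k => f (n - 1 - k)),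
    Fin.sum_univ_eq_sum_range (fun k => f (n + k)), sum_range_reflect f n, two_mul,
    sum_range_add]

def lowerAmp (m : ℂ) (n : ℕ) (j : Fin n) : ℂ := m * oneSubPowCoeff (2 * n - 1) (n - 1 - j)

def upperAmp (m : ℂ) (n : ℕ) (j : Fin n) : ℂ := -(m * oneSubPowCoeff (2 * n - 1) (n + j))

lemma exp_mul_sum_lowerAmp_sub_sum_upperAmp (m : ℂ) {n : ℕ} (hn : 1 ≤ n) (s : ℝ) :
    exp (I * (n * s)) *
        (∑ j : Fin n, lowerAmp m n j * exp (I * ((-((((j : ℕ) : ℝ) + 1) * s) : ℝ) : ℂ)) -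
          ∑ j : Fin n, upperAmp m n j * exp (I * ((((j : ℕ) : ℝ) * s : ℝ) : ℂ))) =
      m * (1 - exp (I * s)) ^ (2 * n - 1) := by
  have hlower (j : Fin n) :
      exp (I * (n * s)) * exp (I * ((-((((j : ℕ) : ℝ) + 1) * s) : ℝ) : ℂ)) =
        exp (I * s) ^ (n - 1 - (j : ℕ)) := by
    rw [← exp_add, ← exp_nat_mul, show n - 1 - (j : ℕ) = n - ((j : ℕ) + 1) by omega,
      Nat.cast_sub (by omega : (j : ℕ) + 1 ≤ n)]
    push_cast
    ring_nf
  have hupper (j : Fin n) :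
      exp (I * (n * s)) * exp (I * ((((j : ℕ) : ℝ) * s : ℝ) : ℂ)) =
        exp (I * s) ^ (n + (j : ℕ)) := by
    rw [← exp_add, ← exp_nat_mul]
    push_cast
    ring_nf
  rw [← sum_oneSubPowCoeff_mul_pow, show 2 * n - 1 + 1 = 2 * n by omega,
    ← sum_fin_reflect_add_sum_fin_add (fun k => oneSubPowCoeff (2 * n - 1) k * exp (I * s) ^ k),
    mul_sub, mul_add, mul_sum, mul_sum, mul_sum, mul_sum, sub_eq_add_neg, ← sum_neg_distrib]
  congr 1 <;> refine sum_congr rfl fun j _ => ?_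
  · rw [lowerAmp, ← hlower j]; ring
  · rw [upperAmp, ← hupper j]; ring

lemma norm_sum_lowerAmp_sub_sum_upperAmp_le (m : ℂ) {n : ℕ} (hn : 1 ≤ n) (s : ℝ) :
    ‖∑ j : Fin n, lowerAmp m n j * exp (I * ((-((((j : ℕ) : ℝ) + 1) * s) : ℝ) : ℂ)) -
        ∑ j : Fin n, upperAmp m n j * exp (I * ((((j : ℕ) : ℝ) * s : ℝ) : ℂ))‖ ≤
      ‖m‖ * |s| ^ (2 * n - 1) := by
  have hunit : ‖exp (I * (n * s))‖ = 1 := by exact_mod_cast norm_exp_I_mul_ofReal (n * s)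
  have h := congrArg norm (exp_mul_sum_lowerAmp_sub_sum_upperAmp m hn s)
  rw [norm_mul, hunit, one_mul] at h
  rw [h, norm_mul, norm_pow, norm_sub_rev]
  gcongr
  exact Real.norm_exp_I_mul_ofReal_sub_one_le

lemma norm_upperAmp (m : ℂ) (n : ℕ) (j : Fin n) :
    ‖upperAmp m n j‖ = ‖m‖ * (2 * n - 1).choose (n + j) := by
  rw [upperAmp, norm_neg, norm_mul, norm_oneSubPowCoeff]

lemma le_norm_upperAmp {m : ℝ} (hm : 0 ≤ m) {n : ℕ} (j : Fin n) : m ≤ ‖upperAmp m n j‖ := by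
  rw [norm_upperAmp, norm_real, Real.norm_of_nonneg hm]
  exact le_mul_of_one_le_right hm
    (by exact_mod_cast Nat.choose_pos (by omega : n + (j : ℕ) ≤ 2 * n - 1))

lemma norm_upperAmp_last {m : ℝ} (hm : 0 ≤ m) {n : ℕ} (hn : 1 ≤ n) :
    ‖upperAmp m n ⟨n - 1, by omega⟩‖ = m := by
  rw [norm_upperAmp, norm_real, Real.norm_of_nonneg hm, show n + (n - 1) = 2 * n - 1 by omega,
    Nat.choose_self, Nat.cast_one, mul_one]

lemma inner_toLp_const_add_smul {ι : Type*} [Fintype ι] (x t : ℝ) (ω : EuclideanSpace ℝ ι) :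
    inner ℝ (WithLp.toLp 2 (fun _ : ι => x) + t • WithLp.toLp 2 (fun _ : ι => x)) ω =
      (1 + t) * x * ∑ k, ω k := by
  simp only [PiLp.inner_apply, RCLike.inner_apply, conj_trivial, PiLp.add_apply,
    PiLp.smul_apply, smul_eq_mul, mul_sum]
  exact sum_congr rfl fun k _ => by ring

lemma abs_sum_le_sqrt_card_mul_norm {ι : Type*} [Fintype ι] (ω : EuclideanSpace ℝ ι) :
    |∑ k, ω k| ≤ √(Fintype.card ι) * ‖ω‖ := by
  have hones : ‖(WithLp.toLp 2 (fun _ : ι => (1 : ℝ)) : EuclideanSpace ℝ ι)‖ =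
      √(Fintype.card ι) := by
    simp [EuclideanSpace.norm_eq]
  have hinner : inner ℝ (WithLp.toLp 2 (fun _ : ι => (1 : ℝ)) : EuclideanSpace ℝ ι) ω =
      ∑ k, ω k := by
    simp [PiLp.inner_apply]
  rw [← hinner, ← hones]
  exact abs_real_inner_le_norm _ _

lemma abs_phase_le {d t T : ℕ} (hd : 1 ≤ d) (ht : t ≤ T) {Ω Δ : ℝ} (hΔ : 0 ≤ Δ)
    {ω : EuclideanSpace ℝ (Fin d)} (hω : ‖ω‖ ≤ Ω) :
    |(1 + t) * (Δ / √d) * ∑ k, ω k| ≤ (T + 1) * Ω * Δ := by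
  have hsqrt : 0 < √(d : ℝ) := Real.sqrt_pos.2 (by exact_mod_cast hd)
  have hsum : |∑ k, ω k| ≤ √d * Ω := by
    have h := abs_sum_le_sqrt_card_mul_norm ω
    rw [Fintype.card_fin] at h
    exact h.trans (by gcongr)
  have ht' : (t : ℝ) ≤ T := by exact_mod_cast ht
  calc |(1 + t) * (Δ / √d) * ∑ k, ω k| = (1 + t) * (Δ / √d) * |∑ k, ω k| := by
        rw [abs_mul, abs_of_nonneg (by positivity)]
    _ ≤ (1 + T) * (Δ / √d) * (√d * Ω) := by gcongr
    _ = (T + 1) * Ω * Δ := by field_simp; ring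

lemma mul_mul_rpow_inv_pow_lt {N : ℕ} (hN : N ≠ 0) {σ m C : ℝ} (hσ : 0 < σ) (hσm : σ < m)
    (hC : 0 ≤ C) (hC1 : C < 1) :
    m * (C * (σ / m) ^ (N : ℝ)⁻¹) ^ N < σ := by
  have hm : 0 < m := hσ.trans hσm
  calc m * (C * (σ / m) ^ (N : ℝ)⁻¹) ^ N = C ^ N * σ := by
        rw [mul_pow, Real.rpow_inv_natCast_pow (by positivity) hN]
        field_simp
    _ < 1 * σ := by gcongr; exact pow_lt_one₀ hC hC1 hN
    _ = σ := one_mul σ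

lemma norm_sum_lowerAmp_sub_sum_upperAmp_lt {n : ℕ} (hn : 1 ≤ n) {σ m C s : ℝ} (hσ : 0 < σ)
    (hσm : σ < m) (hC : 0 ≤ C) (hC1 : C < 1)
    (hs : |s| ≤ C * (σ / m) ^ ((1 : ℝ) / (2 * (n : ℝ) - 1))) :
    ‖∑ j : Fin n, lowerAmp m n j * exp (I * ((-((((j : ℕ) : ℝ) + 1) * s) : ℝ) : ℂ)) -
        ∑ j : Fin n, upperAmp m n j * exp (I * ((((j : ℕ) : ℝ) * s : ℝ) : ℂ))‖ < σ := by
  have hm : 0 < m := hσ.trans hσm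
  have hexp : (1 : ℝ) / (2 * (n : ℝ) - 1) = ((2 * n - 1 : ℕ) : ℝ)⁻¹ := by
    rw [Nat.cast_sub (by omega), one_div]
    push_cast
    rfl
  rw [hexp] at hs
  calc _ ≤ ‖(m : ℂ)‖ * |s| ^ (2 * n - 1) := norm_sum_lowerAmp_sub_sum_upperAmp_le _ hn s
    _ ≤ m * (C * (σ / m) ^ ((2 * n - 1 : ℕ) : ℝ)⁻¹) ^ (2 * n - 1) := by
        rw [norm_real, Real.norm_of_nonneg hm.le]
        gcongr
    _ < σ := mul_mul_rpow_inv_pow_lt (by omega) hσ hσm hC hC1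

/-- `w j` and `what j` stand for the scaled velocities `τ v_j` and `τ v̂_j`. -/
theorem worst_case_location_velocity_recovery_long_window_general
    (d n T : ℕ) (hd : 1 ≤ d) (hn : 2 ≤ n)
    (Ω σ mmin : ℝ) (hΩ : 0 < Ω) (hσ0 : 0 < σ) (hσm : σ < mmin) :
    ∃ a ahat : Fin n → ℂ,
      letI Δ : ℝ :=
        0.49 * Real.exp (-(3 : ℝ) / 2) / (((T : ℝ) + 1) * Ω) *
          (σ / mmin) ^ ((1 : ℝ) / (2 * (n : ℝ) - 1))
      -- `α̂_j = (yhat j, what j) = −(jΔ/√d)·(1,…,1) ∈ ℝ^{2d}`, `j = 1,…,n`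
      letI yhat : Fin n → EuclideanSpace ℝ (Fin d) :=
        fun j => WithLp.toLp 2 (fun _ => -((((j : ℕ) : ℝ) + 1) * Δ / Real.sqrt d))
      letI what : Fin n → EuclideanSpace ℝ (Fin d) :=
        fun j => WithLp.toLp 2 (fun _ => -((((j : ℕ) : ℝ) + 1) * Δ / Real.sqrt d))
      -- `α_1 = 0` and `α_j = ((j−1)Δ/√d)·(1,…,1) ∈ ℝ^{2d}`, `j = 2,…,n`
      letI y : Fin n → EuclideanSpace ℝ (Fin d) :=
        fun j => WithLp.toLp 2 (fun _ => ((j : ℕ) : ℝ) * Δ / Real.sqrt d)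
      letI w : Fin n → EuclideanSpace ℝ (Fin d) :=
        fun j => WithLp.toLp 2 (fun _ => ((j : ℕ) : ℝ) * Δ / Real.sqrt d)
      (∀ t ≤ T, ∀ ω : EuclideanSpace ℝ (Fin d), ‖ω‖ ≤ Ω →
        norm
          ((∑ j, ahat j * Complex.exp (Complex.I *
              ((inner ℝ (yhat j + (t : ℝ) • what j) ω : ℝ) : ℂ))) -
           (∑ j, a j * Complex.exp (Complex.I *
              ((inner ℝ (y j + (t : ℝ) • w j) ω : ℝ) : ℂ)))) < σ) ∧
      (((∀ j, mmin ≤ norm (a j)) ∧ (∃ j, norm (a j) = mmin)) ∨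
       ((∀ j, mmin ≤ norm (ahat j)) ∧ (∃ j, norm (ahat j) = mmin))) := by
  have hm : 0 < mmin := hσ0.trans hσm
  refine ⟨upperAmp mmin n, lowerAmp mmin n, fun t ht ω hω => ?_,
    Or.inl ⟨le_norm_upperAmp hm.le, _, norm_upperAmp_last hm.le (by omega)⟩⟩
  set C : ℝ := 0.49 * Real.exp (-(3 : ℝ) / 2)
  set r : ℝ := (σ / mmin) ^ ((1 : ℝ) / (2 * (n : ℝ) - 1))
  set Δ : ℝ := C / (((T : ℝ) + 1) * Ω) * r with hΔ
  set s : ℝ := (1 + t) * (Δ / √d) * ∑ k, ω k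
  have hphase_hat (j : Fin n) : (1 + t) * -((((j : ℕ) : ℝ) + 1) * Δ / √d) * ∑ k, ω k =
      -((((j : ℕ) : ℝ) + 1) * s) := by
    ring
  have hphase (j : Fin n) : (1 + t) * (((j : ℕ) : ℝ) * Δ / √d) * ∑ k, ω k = ((j : ℕ) : ℝ) * s := by
    ring
  have hC1 : C < 1 := by
    have := Real.exp_le_one_iff.2 (by norm_num : -(3 : ℝ) / 2 ≤ 0)
    show 0.49 * Real.exp (-(3 : ℝ) / 2) < 1
    linarith
  have hs : |s| ≤ C * r :=
    calc |s| ≤ (T + 1) * Ω * Δ := abs_phase_le hd ht (by rw [hΔ]; positivity) hω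
      _ = C * r := by rw [hΔ]; field_simp
  simp only [inner_toLp_const_add_smul, hphase_hat, hphase]
  exact norm_sum_lowerAmp_sub_sum_upperAmp_lt (by omega) hσ0 hσm (by positivity) hC1 hs

/-- Proposition 2.8: worst-case example for location–velocity recovery over a
long time window.  Here `w j` and `what j` denote the scaled velocities `τ v_j`
and `τ v̂_j`, so that the concatenated location–velocity vectors are
`α_j = (y j, w j)` and `α̂_j = (yhat j, what j)`, all proportional to the
all-ones vector. -/
theorem worst_case_location_velocity_recovery_long_window
    (d n T : ℕ) (hd : 1 ≤ d) (hn : 2 ≤ n)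
    (Ω τ σ mmin : ℝ) (hΩ : 0 < Ω) (hτ : 0 < τ) (hσ0 : 0 < σ) (hσm : σ < mmin) :
    ∃ a ahat : Fin n → ℂ,
      letI Δ : ℝ :=
        0.49 * Real.exp (-(3 : ℝ) / 2) / (((T : ℝ) + 1) * Ω) *
          (σ / mmin) ^ ((1 : ℝ) / (2 * (n : ℝ) - 1))
      -- `α̂_j = (yhat j, what j) = −(jΔ/√d)·(1,…,1) ∈ ℝ^{2d}`, `j = 1,…,n`
      letI yhat : Fin n → EuclideanSpace ℝ (Fin d) :=
        fun j => WithLp.toLp 2 (fun _ => -((((j : ℕ) : ℝ) + 1) * Δ / Real.sqrt d))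
      letI what : Fin n → EuclideanSpace ℝ (Fin d) :=
        fun j => WithLp.toLp 2 (fun _ => -((((j : ℕ) : ℝ) + 1) * Δ / Real.sqrt d))
      -- `α_1 = 0` and `α_j = ((j−1)Δ/√d)·(1,…,1) ∈ ℝ^{2d}`, `j = 2,…,n`
      letI y : Fin n → EuclideanSpace ℝ (Fin d) :=
        fun j => WithLp.toLp 2 (fun _ => ((j : ℕ) : ℝ) * Δ / Real.sqrt d)
      letI w : Fin n → EuclideanSpace ℝ (Fin d) :=
        fun j => WithLp.toLp 2 (fun _ => ((j : ℕ) : ℝ) * Δ / Real.sqrt d)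
      (∀ t ≤ T, ∀ ω : EuclideanSpace ℝ (Fin d), ‖ω‖ ≤ Ω →
        norm
          ((∑ j, ahat j * Complex.exp (Complex.I *
              ((inner ℝ (yhat j + (t : ℝ) • what j) ω : ℝ) : ℂ))) -
           (∑ j, a j * Complex.exp (Complex.I *
              ((inner ℝ (y j + (t : ℝ) • w j) ω : ℝ) : ℂ)))) < σ) ∧
      (((∀ j, mmin ≤ norm (a j)) ∧ (∃ j, norm (a j) = mmin)) ∨
       ((∀ j, mmin ≤ norm (ahat j)) ∧ (∃ j, norm (ahat j) = mmin))) :=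
  worst_case_location_velocity_recovery_long_window_general d n T hd hn Ω σ mmin hΩ hσ0 hσm
end

section
/- (Lemma 7.2, angle between the subspaces S_t^d) Let d ≥ 1 and let j < t be nonnegative integers. For any nonzero vector q_t ∈ S_t^d and any nonzero vector q_j ∈ S_j^d with ⟨q_t, q_j⟩ ≥ 0, the angle ∠(q_t, q_j) := arccos(⟨q_t, q_j⟩/(‖q_t‖₂‖q_j‖₂)) satisfies Σ_{k=j+1}^{t} 1/(1+k²) < ∠(q_t, q_j) ≤ π/2. -/
/-- The linear embedding `v ↦ (v, t v)` of `ℝ^d` into `ℝ^{2d}`. -/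
noncomputable def Smap (d : ℕ) (t : ℝ) :
    EuclideanSpace ℝ (Fin d) →ₗ[ℝ] EuclideanSpace ℝ (Fin d ⊕ Fin d) where
  toFun v := concatVec v (t • v)
  map_add' u w := by
    ext i
    cases i with
    | inl i => rfl
    | inr i =>
      show t * (u i + w i) = t * u i + t * w i
      ring
  map_smul' c v := by
    ext i
    cases i with
    | inl i => rfl
    | inr i =>
      show t * (c * v i) = c * (t * v i)
      ring

/-- The subspace `S_t^d = {(v, t v) : v ∈ ℝ^d}` of `ℝ^{2d}`. -/
noncomputable def Ssub (d : ℕ) (t : ℝ) : Submodule ℝ (EuclideanSpace ℝ (Fin d ⊕ Fin d)) :=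
  LinearMap.range (Smap d t)

/-!
Writing `q = (v, s v)` and `q' = (w, r w)`, one has `⟨q, q'⟩ = (1 + s r) ⟨v, w⟩` and
`‖q‖ = √(1 + s²) ‖v‖`, so `cos ∠(q, q') = cos (arctan s - arctan r) · cos ∠(v, w)`.
When `1 + s r ≥ 0` this is at most `cos (arctan s - arctan r)`, hence
`∠(q, q') ≥ |arctan s - arctan r|`. Finally `arctan t - arctan j` exceeds
`Σ_{k=j+1}^t 1/(1+k²)` by the mean value theorem, since `arctan' = 1/(1+x²)` is decreasing
on `[0, ∞)`.
-/

open Real InnerProductGeometry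

section Smap

variable {d : ℕ}

lemma inner_Smap (s r : ℝ) (v w : EuclideanSpace ℝ (Fin d)) :
    inner ℝ (Smap d s v) (Smap d r w) = (1 + s * r) * inner ℝ v w := by
  simp only [Smap, LinearMap.coe_mk, AddHom.coe_mk, concatVec, PiLp.inner_apply,
    RCLike.inner_apply, conj_trivial, Fintype.sum_sum_type, Sum.elim_inl, Sum.elim_inr,
    PiLp.smul_apply, smul_eq_mul]
  rw [add_mul, one_mul, Finset.mul_sum]
  congr 1
  exact Finset.sum_congr rfl fun i _ => by ring

lemma norm_Smap (s : ℝ) (v : EuclideanSpace ℝ (Fin d)) :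
    ‖Smap d s v‖ = √(1 + s ^ 2) * ‖v‖ := by
  rw [norm_eq_sqrt_real_inner, inner_Smap, ← sq, Real.sqrt_mul (by positivity),
    ← norm_eq_sqrt_real_inner]

lemma cos_arctan_sub_arctan (s r : ℝ) :
    cos (arctan s - arctan r) = (1 + s * r) / (√(1 + s ^ 2) * √(1 + r ^ 2)) := by
  rw [cos_sub, cos_arctan, sin_arctan, cos_arctan, sin_arctan]
  field_simp

lemma cos_angle_Smap (s r : ℝ) (v w : EuclideanSpace ℝ (Fin d)) :
    cos (angle (Smap d s v) (Smap d r w)) = cos (arctan s - arctan r) * cos (angle v w) := by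
  rw [cos_angle, cos_angle, cos_arctan_sub_arctan, inner_Smap, norm_Smap, norm_Smap]
  ring

lemma abs_arctan_sub_arctan_le_angle_of_mem_Ssub {s r : ℝ} (hsr : 0 ≤ 1 + s * r)
    {q q' : EuclideanSpace ℝ (Fin d ⊕ Fin d)} (hq : q ∈ Ssub d s) (hq' : q' ∈ Ssub d r) :
    |arctan s - arctan r| ≤ angle q q' := by
  obtain ⟨v, rfl⟩ := hq
  obtain ⟨w, rfl⟩ := hq'
  have hcos_nonneg : 0 ≤ cos (arctan s - arctan r) := by
    rw [cos_arctan_sub_arctan]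
    positivity
  have habs_le_pi : |arctan s - arctan r| ≤ π := by
    rw [abs_sub_le_iff]
    constructor <;> linarith [arctan_lt_pi_div_two s, neg_pi_div_two_lt_arctan s,
      arctan_lt_pi_div_two r, neg_pi_div_two_lt_arctan r]
  calc |arctan s - arctan r|
      = arccos (cos (arctan s - arctan r)) := by
        rw [← cos_abs, arccos_cos (abs_nonneg _) habs_le_pi]
    _ ≤ arccos (cos (arctan s - arctan r) * cos (angle v w)) :=
        arccos_le_arccos (mul_le_of_le_one_right hcos_nonneg (cos_le_one _))
    _ = angle (Smap d s v) (Smap d r w) := by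
        rw [← cos_angle_Smap, arccos_cos (angle_nonneg _ _) (angle_le_pi _ _)]

end Smap

lemma div_one_add_sq_lt_arctan_sub_arctan {a b : ℝ} (ha : 0 ≤ a) (hab : a < b) :
    (b - a) / (1 + b ^ 2) < arctan b - arctan a := by
  obtain ⟨c, ⟨hac, hcb⟩, hslope⟩ := exists_hasDerivAt_eq_slope arctan (fun x => 1 / (1 + x ^ 2))
    hab continuous_arctan.continuousOn (fun x _ => hasDerivAt_arctan x)
  have hba : 0 < b - a := sub_pos.2 hab
  rw [eq_div_iff hba.ne'] at hslope
  rw [← hslope, div_eq_mul_one_div, mul_comm]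
  gcongr
  nlinarith

lemma sum_Icc_one_div_one_add_sq_lt_arctan_sub_arctan {j t : ℕ} (hjt : j < t) :
    ∑ k ∈ Finset.Icc (j + 1) t, 1 / (1 + (k : ℝ) ^ 2) < arctan t - arctan j := by
  have step (k : ℕ) : 1 / (1 + ((k + 1 : ℕ) : ℝ) ^ 2) < arctan (k + 1 : ℕ) - arctan k := by
    simpa using div_one_add_sq_lt_arctan_sub_arctan (Nat.cast_nonneg k) (lt_add_one (k : ℝ))
  induction t, hjt using Nat.le_induction with
  | base => simpa using step j
  | succ t _ ih =>
    rw [Finset.sum_Icc_succ_top (by omega)]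
    linarith [step t]

theorem angle_between_Std_subspaces_general
    (d : ℕ) (j t : ℕ) (hjt : j < t)
    (qt qj : EuclideanSpace ℝ (Fin d ⊕ Fin d))
    (hqt : qt ∈ Ssub d (t : ℝ)) (hqj : qj ∈ Ssub d (j : ℝ))
    (hip : 0 ≤ (inner ℝ qt qj : ℝ)) :
    (Finset.sum (Finset.Icc (j + 1) t) (fun k => (1 : ℝ) / (1 + (k : ℝ) ^ 2))) <
        Real.arccos ((inner ℝ qt qj : ℝ) / (‖qt‖ * ‖qj‖)) ∧
      Real.arccos ((inner ℝ qt qj : ℝ) / (‖qt‖ * ‖qj‖)) ≤ Real.pi / 2 := by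
  have hangle : arctan t - arctan j ≤ angle qt qj :=
    (le_abs_self _).trans (abs_arctan_sub_arctan_le_angle_of_mem_Ssub (by positivity) hqt hqj)
  exact ⟨(sum_Icc_one_div_one_add_sq_lt_arctan_sub_arctan hjt).trans_le hangle,
    arccos_le_pi_div_two.2 (div_nonneg hip (by positivity))⟩

/-- Lemma 7.2: the angle between nonzero vectors of `S_t^d` and `S_j^d` (for
`j < t`) with nonnegative inner product lies in
`(Σ_{k=j+1}^t 1/(1+k²), π/2]`. -/
theorem angle_between_Std_subspaces
    (d : ℕ) (hd : 1 ≤ d) (j t : ℕ) (hjt : j < t)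
    (qt qj : EuclideanSpace ℝ (Fin d ⊕ Fin d))
    (hqt : qt ∈ Ssub d (t : ℝ)) (hqj : qj ∈ Ssub d (j : ℝ))
    (hqt0 : qt ≠ 0) (hqj0 : qj ≠ 0)
    (hip : 0 ≤ (inner ℝ qt qj : ℝ)) :
    (Finset.sum (Finset.Icc (j + 1) t) (fun k => (1 : ℝ) / (1 + (k : ℝ) ^ 2))) <
        Real.arccos ((inner ℝ qt qj : ℝ) / (‖qt‖ * ‖qj‖)) ∧
      Real.arccos ((inner ℝ qt qj : ℝ) / (‖qt‖ * ‖qj‖)) ≤ Real.pi / 2 :=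
  angle_between_Std_subspaces_general d j t hjt qt qj hqt hqj hip
end

section
/- (Lemma 7.4, two near-orthogonal directions capture the norm) Let u ∈ ℝ² and let q_1, q_2 ∈ ℝ² be unit vectors such that |⟨q_1, q_2⟩| ≤ cos θ for a real number θ. Then |⟨q_1, u⟩|² + |⟨q_2, u⟩|² ≥ (1 − cos θ)·‖u‖₂². -/
/-!
Write `t = ⟪q₁, q₂⟫`, `a = ⟪q₁, u⟫`, `b = ⟪q₂, u⟫`. Three vectors in the plane are linearly
dependent, so their Gram determinant vanishes; for unit `q₁, q₂` this reads
`(1 - t²) ‖u‖² = a² + b² - 2tab`. Since `2|tab| ≤ |t| (a² + b²)`, the right-hand side is at most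
`(1 + |t|)(a² + b²)`, and cancelling `1 + |t|` gives `(1 - |t|) ‖u‖² ≤ a² + b²`.
-/

open RealInnerProductSpace

namespace EuclideanSpace

lemma sq_norm_fin_two (x : EuclideanSpace ℝ (Fin 2)) : ‖x‖ ^ 2 = x 0 ^ 2 + x 1 ^ 2 := by
  simp [real_norm_sq_eq, Fin.sum_univ_two]

lemma inner_fin_two (x y : EuclideanSpace ℝ (Fin 2)) : ⟪x, y⟫ = x 0 * y 0 + x 1 * y 1 := by
  simp [PiLp.inner_apply, Fin.sum_univ_two, mul_comm]

lemma sq_norm_mul_gram_fin_two (q₁ q₂ u : EuclideanSpace ℝ (Fin 2)) :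
    ‖u‖ ^ 2 * (‖q₁‖ ^ 2 * ‖q₂‖ ^ 2 - ⟪q₁, q₂⟫ ^ 2) =
      ‖q₂‖ ^ 2 * ⟪q₁, u⟫ ^ 2 + ‖q₁‖ ^ 2 * ⟪q₂, u⟫ ^ 2 - 2 * ⟪q₁, q₂⟫ * ⟪q₁, u⟫ * ⟪q₂, u⟫ := by
  simp only [sq_norm_fin_two, inner_fin_two]
  ring

lemma one_sub_abs_inner_mul_sq_norm_le {q₁ q₂ : EuclideanSpace ℝ (Fin 2)}
    (hq₁ : ‖q₁‖ = 1) (hq₂ : ‖q₂‖ = 1) (u : EuclideanSpace ℝ (Fin 2)) :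
    (1 - |⟪q₁, q₂⟫|) * ‖u‖ ^ 2 ≤ ⟪q₁, u⟫ ^ 2 + ⟪q₂, u⟫ ^ 2 := by
  have gram := sq_norm_mul_gram_fin_two q₁ q₂ u
  rw [hq₁, hq₂] at gram
  set t := ⟪q₁, q₂⟫
  set a := ⟪q₁, u⟫
  set b := ⟪q₂, u⟫
  have cross : -(2 * t * a * b) ≤ |t| * (a ^ 2 + b ^ 2) := by
    have hab : 2 * |a * b| ≤ a ^ 2 + b ^ 2 := by
      rw [abs_mul, ← sq_abs a, ← sq_abs b]
      nlinarith [sq_nonneg (|a| - |b|)]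
    calc -(2 * t * a * b) ≤ |t| * (2 * |a * b|) := by
          linarith [neg_abs_le (t * (a * b)), abs_mul t (a * b)]
      _ ≤ |t| * (a ^ 2 + b ^ 2) := by gcongr
  have hpos : 0 < 1 + |t| := by positivity
  refine le_of_mul_le_mul_left ?_ hpos
  calc (1 + |t|) * ((1 - |t|) * ‖u‖ ^ 2) = ‖u‖ ^ 2 * (1 - t ^ 2) := by rw [← sq_abs t]; ring
    _ = a ^ 2 + b ^ 2 - 2 * t * a * b := by linear_combination gram
    _ ≤ (1 + |t|) * (a ^ 2 + b ^ 2) := by linarith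

end EuclideanSpace

/-- Lemma 7.4: two directions in the plane whose mutual inner product is at most
`cos θ` in absolute value jointly capture a `(1 − cos θ)` fraction of the squared
norm of any vector. -/
theorem two_near_orthogonal_directions_capture_norm
    (u q₁ q₂ : EuclideanSpace ℝ (Fin 2))
    (hq₁ : ‖q₁‖ = 1) (hq₂ : ‖q₂‖ = 1)
    (θ : ℝ) (hangle : |(inner ℝ q₁ q₂ : ℝ)| ≤ Real.cos θ) :
    (1 - Real.cos θ) * ‖u‖ ^ 2 ≤
      |(inner ℝ q₁ u : ℝ)| ^ 2 + |(inner ℝ q₂ u : ℝ)| ^ 2 := by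
  rw [sq_abs, sq_abs]
  calc (1 - Real.cos θ) * ‖u‖ ^ 2 ≤ (1 - |⟪q₁, q₂⟫|) * ‖u‖ ^ 2 := by gcongr
    _ ≤ _ := EuclideanSpace.one_sub_abs_inner_mul_sq_norm_le hq₁ hq₂ u
end

section
/- (Lemma 7.5, two projections onto S_t^d and S_j^d capture the norm) Let d ≥ 1, let j < t be nonnegative integers and let u ∈ ℝ^{2d}. Then ‖P_{S_t^d}(u)‖₂² + ‖P_{S_j^d}(u)‖₂² ≥ (1 − cos θ)·‖u‖₂², where θ = Σ_{k=j+1}^{t} 1/(1+k²). -/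
/-! With `α = arctan s`, the subspace `S_s` contains the orthonormal vectors
`(cos α • eᵢ, sin α • eᵢ)`, so by Bessel `‖P_{S_s} u‖² ≥ ∑ᵢ (xᵢ cos α + yᵢ sin α)²` for
`u = (x, y)`. Coordinatewise this reduces the claim to the plane, where the squared components
of a vector along two unit vectors at angle `α - β` (with `cos (α - β) ≥ 0`) add up to at least
`1 - cos (α - β)` times its squared norm. Finally `θ ≤ arctan t - arctan j < π / 2`, comparing
each `1 / (1 + k²)` with `arctan k - arctan (k - 1)`, and `cos` is antitone on `[0, π]`. -/

open Real Finset
open scoped RealInnerProductSpace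

lemma sub_div_one_add_sq_le_arctan_sub {a b : ℝ} (hab : |a| ≤ b) :
    (b - a) / (1 + b ^ 2) ≤ arctan b - arctan a := by
  obtain ⟨hba, hab⟩ := abs_le.mp hab
  have hderiv : ∀ x ∈ interior (Set.Icc a b), 1 / (1 + b ^ 2) ≤ deriv arctan x := by
    rw [interior_Icc, Real.deriv_arctan]
    rintro x ⟨hax, hxb⟩
    have hx : x ^ 2 ≤ b ^ 2 := sq_le_sq' (by linarith) hxb.le
    exact one_div_le_one_div_of_le (by positivity) (by linarith)
  have := (convex_Icc a b : Convex ℝ (Set.Icc a b)).mul_sub_le_image_sub_of_le_deriv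
    continuous_arctan.continuousOn differentiable_arctan.differentiableOn hderiv
    a (Set.left_mem_Icc.2 hab) b (Set.right_mem_Icc.2 hab) hab
  rwa [one_div_mul_eq_div] at this

lemma sum_Icc_one_div_one_add_sq_le_arctan_sub {j t : ℕ} (hjt : j ≤ t) :
    ∑ k ∈ Icc (j + 1) t, 1 / (1 + (k : ℝ) ^ 2) ≤ arctan t - arctan j := by
  rw [← Finset.Ico_add_one_right_eq_Icc, ← sum_Ico_add', ← sum_Ico_sub (fun k : ℕ ↦ arctan k) hjt]
  gcongr with k
  simpa using sub_div_one_add_sq_le_arctan_sub (a := k) (b := k + 1) (by simp [abs_of_nonneg])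

lemma cos_arctan_sub_arctan_nonneg {x y : ℝ} (hx : 0 ≤ x) (hy : 0 ≤ y) :
    0 ≤ cos (arctan x - arctan y) :=
  cos_nonneg_of_mem_Icc ⟨by linarith [arctan_lt_pi_div_two y, arctan_nonneg.2 hx],
    by linarith [arctan_lt_pi_div_two x, arctan_nonneg.2 hy]⟩

/-- `key` is the spectral decomposition of `x ↦ ⟪x, e⟫² + ⟪x, f⟫²` for `e = (cos A, sin A)`,
`f = (cos B, sin B)`: its eigenvalues are `1 ± c` with `c = ⟪e, f⟫`, and `e + f` spans the
`1 + c` eigenspace. -/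
lemma one_sub_cos_sub_mul_sq_add_sq_le {A B : ℝ} (hAB : 0 ≤ cos (A - B)) (a b : ℝ) :
    (1 - cos (A - B)) * (a ^ 2 + b ^ 2) ≤
      (a * cos A + b * sin A) ^ 2 + (a * cos B + b * sin B) ^ 2 := by
  set p := a * cos A + b * sin A
  set q := a * cos B + b * sin B
  set c := cos (A - B) with hc
  have key : (1 + c) * (p ^ 2 + q ^ 2 - (1 - c) * (a ^ 2 + b ^ 2)) = c * (p + q) ^ 2 := by
    rw [hc, cos_sub]
    linear_combination
      ((a * sin B - b * cos B) ^ 2 - (a ^ 2 + b ^ 2) * (sin B ^ 2 + cos B ^ 2 - 1)) *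
        sin_sq_add_cos_sq A + (a * sin A - b * cos A) ^ 2 * sin_sq_add_cos_sq B
  nlinarith [mul_nonneg hAB (sq_nonneg (p + q))]

lemma Orthonormal.sum_inner_sq_le_norm_starProjection_sq {E ι : Type*} [NormedAddCommGroup E]
    [InnerProductSpace ℝ E] {K : Submodule ℝ E} [K.HasOrthogonalProjection] {f : ι → E}
    (hf : Orthonormal ℝ f) (hfK : ∀ i, f i ∈ K) (s : Finset ι) (u : E) :
    ∑ i ∈ s, ⟪f i, u⟫ ^ 2 ≤ ‖K.starProjection u‖ ^ 2 := by
  have hproj : ∀ i, ⟪f i, K.starProjection u⟫ = ⟪f i, u⟫ := fun i ↦ by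
    rw [← K.inner_starProjection_left_eq_right, Submodule.starProjection_eq_self_iff.2 (hfK i)]
  simpa only [hproj, Real.norm_eq_abs, sq_abs] using hf.sum_inner_products_le (K.starProjection u)

section Smap

variable (d : ℕ) (s : ℝ)

@[simp]
lemma Smap_apply_inl (v : EuclideanSpace ℝ (Fin d)) (i : Fin d) : Smap d s v (Sum.inl i) = v i :=
  rfl

@[simp]
lemma Smap_apply_inr (v : EuclideanSpace ℝ (Fin d)) (i : Fin d) :
    Smap d s v (Sum.inr i) = s * v i :=
  rfl

lemma inner_Smap_left (v : EuclideanSpace ℝ (Fin d)) (w : EuclideanSpace ℝ (Fin d ⊕ Fin d)) :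
    ⟪Smap d s v, w⟫ = ∑ i, v i * (w (Sum.inl i) + s * w (Sum.inr i)) := by
  simp only [PiLp.inner_apply, Fintype.sum_sum_type, ← Finset.sum_add_distrib, Smap_apply_inl,
    Smap_apply_inr, RCLike.inner_apply, conj_trivial]
  exact Finset.sum_congr rfl fun i _ ↦ by ring

lemma inner_Smap_Smap (v v' : EuclideanSpace ℝ (Fin d)) :
    ⟪Smap d s v, Smap d s v'⟫ = (1 + s ^ 2) * ⟪v, v'⟫ := by
  rw [inner_Smap_left, PiLp.inner_apply, Finset.mul_sum]
  refine Finset.sum_congr rfl fun i _ ↦ ?_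
  simp only [Smap_apply_inl, Smap_apply_inr, RCLike.inner_apply, conj_trivial]
  ring

lemma orthonormal_cos_arctan_smul_Smap_single :
    Orthonormal ℝ fun i : Fin d ↦ cos (arctan s) • Smap d s (EuclideanSpace.single i 1) := by
  rw [orthonormal_iff_ite]
  intro i i'
  rw [real_inner_smul_left, real_inner_smul_right, inner_Smap_Smap,
    ← orthonormal_iff_ite.1 EuclideanSpace.orthonormal_single i i', ← mul_assoc, ← mul_assoc,
    ← pow_two, cos_sq_arctan, one_div_mul_cancel (by positivity), one_mul]

lemma sum_sq_le_norm_starProjection_Ssub_sq (u : EuclideanSpace ℝ (Fin d ⊕ Fin d)) :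
    ∑ i, (u (Sum.inl i) * cos (arctan s) + u (Sum.inr i) * sin (arctan s)) ^ 2 ≤
      ‖(Ssub d s).starProjection u‖ ^ 2 := by
  have hsin : sin (arctan s) = s * cos (arctan s) := by
    rw [sin_arctan, cos_arctan, mul_one_div]
  have hinner : ∀ i, ⟪cos (arctan s) • Smap d s (EuclideanSpace.single i 1), u⟫ =
      u (Sum.inl i) * cos (arctan s) + u (Sum.inr i) * sin (arctan s) := fun i ↦ by
    rw [real_inner_smul_left, inner_Smap_left, Finset.sum_eq_single i (fun k _ hk ↦ by simp [hk])
      (by simp), hsin]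
    simp only [PiLp.single_eq_same]
    ring
  have hmem : ∀ i, cos (arctan s) • Smap d s (EuclideanSpace.single i 1) ∈ Ssub d s :=
    fun i ↦ Submodule.smul_mem _ _ (LinearMap.mem_range_self _ _)
  simpa only [hinner] using (orthonormal_cos_arctan_smul_Smap_single d s
    ).sum_inner_sq_le_norm_starProjection_sq hmem Finset.univ u

end Smap

lemma one_sub_cos_sub_mul_norm_sq_le {ι : Type*} [Fintype ι] {A B : ℝ} (hAB : 0 ≤ cos (A - B))
    (u : EuclideanSpace ℝ (ι ⊕ ι)) :
    (1 - cos (A - B)) * ‖u‖ ^ 2 ≤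
      ∑ i, (u (Sum.inl i) * cos A + u (Sum.inr i) * sin A) ^ 2 +
        ∑ i, (u (Sum.inl i) * cos B + u (Sum.inr i) * sin B) ^ 2 := by
  rw [EuclideanSpace.real_norm_sq_eq, Fintype.sum_sum_type, ← Finset.sum_add_distrib,
    Finset.mul_sum, ← Finset.sum_add_distrib]
  exact Finset.sum_le_sum fun i _ ↦ one_sub_cos_sub_mul_sq_add_sq_le hAB _ _

theorem two_projections_onto_Std_capture_norm_general
    (d : ℕ) (j t : ℕ) (hjt : j < t)
    (u : EuclideanSpace ℝ (Fin d ⊕ Fin d)) :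
    (1 - Real.cos (Finset.sum (Finset.Icc (j + 1) t) (fun k => (1 : ℝ) / (1 + (k : ℝ) ^ 2)))) *
        ‖u‖ ^ 2 ≤
      ‖(Submodule.orthogonalProjection (Ssub d (t : ℝ)) u : EuclideanSpace ℝ (Fin d ⊕ Fin d))‖ ^ 2 +
        ‖(Submodule.orthogonalProjection (Ssub d (j : ℝ)) u : EuclideanSpace ℝ (Fin d ⊕ Fin d))‖ ^ 2 := by
  set θ := ∑ k ∈ Finset.Icc (j + 1) t, 1 / (1 + (k : ℝ) ^ 2)
  have hθ : θ ≤ arctan t - arctan j := sum_Icc_one_div_one_add_sq_le_arctan_sub hjt.le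
  have hcos : 0 ≤ cos (arctan t - arctan j) :=
    cos_arctan_sub_arctan_nonneg (Nat.cast_nonneg t) (Nat.cast_nonneg j)
  have hcos_le : cos (arctan t - arctan j) ≤ cos θ := by
    refine cos_le_cos_of_nonneg_of_le_pi (Finset.sum_nonneg fun k _ ↦ by positivity) ?_ hθ
    linarith [arctan_lt_pi_div_two t, arctan_nonneg.2 (Nat.cast_nonneg (α := ℝ) j), pi_pos]
  calc (1 - cos θ) * ‖u‖ ^ 2 ≤ (1 - cos (arctan t - arctan j)) * ‖u‖ ^ 2 := by gcongr
    _ ≤ _ := one_sub_cos_sub_mul_norm_sq_le hcos u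
    _ ≤ _ := add_le_add (sum_sq_le_norm_starProjection_Ssub_sq d t u)
      (sum_sq_le_norm_starProjection_Ssub_sq d j u)

/-- Lemma 7.5: the projections of `u` onto `S_t^d` and `S_j^d` (for `j < t`)
jointly capture a definite fraction of its norm. -/
theorem two_projections_onto_Std_capture_norm
    (d : ℕ) (hd : 1 ≤ d) (j t : ℕ) (hjt : j < t)
    (u : EuclideanSpace ℝ (Fin d ⊕ Fin d)) :
    (1 - Real.cos (Finset.sum (Finset.Icc (j + 1) t) (fun k => (1 : ℝ) / (1 + (k : ℝ) ^ 2)))) *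
        ‖u‖ ^ 2 ≤
      ‖(Submodule.orthogonalProjection (Ssub d (t : ℝ)) u : EuclideanSpace ℝ (Fin d ⊕ Fin d))‖ ^ 2 +
        ‖(Submodule.orthogonalProjection (Ssub d (j : ℝ)) u : EuclideanSpace ℝ (Fin d ⊕ Fin d))‖ ^ 2 :=
  two_projections_onto_Std_capture_norm_general d j t hjt u
end

section
/- (Lemma 8.4, a common good one-dimensional projection direction) Let n ≥ 2 and k ≥ 1 be integers and let u_1, …, u_m ∈ ℝ^k with m ≤ n(n−1)/2. Then there exists a one-dimensional linear subspace S of ℝ^k such that for every i = 1,…,m: ‖P_S(u_i)‖₂ ≥ (‖u_i‖₂/(π/2)^{k−1}) · (π/(n(n−1)))^{ξ(k−1)}. -/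
/-!
Write `N = n(n - 1)`, `k = d + 1` and `c = (2/π)ᵈ·(π/N)^ξ(d)`. Normalising the `u i` to unit
vectors `w i`, it suffices to find `x` in the closed unit ball with `c ≤ |⟪w i, x⟫|` for all `i`
and to take `S = ℝ ∙ x`. For `m ≤ 1` take `x = w 0`. In the plane each `w i` rules out an arc of length `2 arcsin c` of directions `t ∈ ℝ/πℤ`; for `c = 2/N` Jordan's
inequality `2/N < sin (π/N)` shows that `m ≤ N/2` such arcs cannot cover the circle. In dimension
`d + 1 ≥ 3` each `w i` rules out a slab of the unit ball of volume at most `2c·vol(Bᵈ)`, while the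
log-convexity of `Γ` gives `vol(Bᵈ⁺¹) ≥ √(2π/(d+2))·vol(Bᵈ)`; since `N·c ≤ π (2/π)ᵈ`, the `m` slabs
cannot cover the ball.
-/

open Real MeasureTheory Metric Set Module
open scoped RealInnerProductSpace

noncomputable def xiSum (k : ℕ) : ℝ := Finset.sum (Finset.Icc 1 k) (fun j => (1 : ℝ) / j)

lemma xiSum_zero : xiSum 0 = 0 := by simp [xiSum]

lemma xiSum_one : xiSum 1 = 1 := by simp [xiSum]

lemma xiSum_le (k : ℕ) : xiSum k ≤ k := by
  calc xiSum k ≤ ∑ _j ∈ Finset.Icc 1 k, (1 : ℝ) :=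
        Finset.sum_le_sum fun j hj => div_le_one_of_le₀
          (by exact_mod_cast (Finset.mem_Icc.1 hj).1) (Nat.cast_nonneg j)
    _ = k := by simp

lemma one_le_xiSum {k : ℕ} (hk : 1 ≤ k) : 1 ≤ xiSum k := by
  have h1 : 1 ∈ Finset.Icc 1 k := Finset.mem_Icc.2 ⟨le_rfl, hk⟩
  unfold xiSum
  simpa using Finset.single_le_sum (f := fun j : ℕ => (1 : ℝ) / j)
    (fun j _ => by positivity) h1

section GoodDirection

variable {E : Type*} [NormedAddCommGroup E] [InnerProductSpace ℝ E] {m : ℕ} {c c' : ℝ}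

variable (E) in
def HasGoodDirection (m : ℕ) (c : ℝ) : Prop :=
  ∀ w : Fin m → E, (∀ i, ‖w i‖ = 1) → ∃ x : E, ‖x‖ ≤ 1 ∧ ∀ i, c ≤ |⟪w i, x⟫|

lemma HasGoodDirection.mono (h : HasGoodDirection E m c) (hc : c' ≤ c) :
    HasGoodDirection E m c' :=
  fun w hw => (h w hw).imp fun _ hx => ⟨hx.1, fun i => hc.trans (hx.2 i)⟩

lemma hasGoodDirection_one_of_le_one (hm : m ≤ 1) : HasGoodDirection E m 1 := by
  intro w hw
  rcases m with _ | _ | m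
  · exact ⟨0, by simp, fun i => i.elim0⟩
  · refine ⟨w 0, (hw 0).le, fun i => ?_⟩
    rw [Fin.fin_one_eq_zero i, real_inner_self_eq_norm_sq, hw 0]
    norm_num
  · omega

lemma HasGoodDirection.exists_mul_norm_le [Nontrivial E] (h : HasGoodDirection E m c)
    (u : Fin m → E) : ∃ x : E, ‖x‖ ≤ 1 ∧ ∀ i, c * ‖u i‖ ≤ |⟪u i, x⟫| := by
  classical
  obtain ⟨e, he⟩ := exists_norm_eq E zero_le_one
  set w : Fin m → E := fun i => if u i = 0 then e else ‖u i‖⁻¹ • u i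
  have hw : ∀ i, ‖w i‖ = 1 := fun i => by
    by_cases hu : u i = 0
    · simp [w, hu, he]
    · simp [w, hu, norm_smul]
  obtain ⟨x, hx1, hx⟩ := h w hw
  refine ⟨x, hx1, fun i => ?_⟩
  by_cases hu : u i = 0
  · simp [hu]
  · have hwi := hx i
    simp only [w, if_neg hu, real_inner_smul_left, abs_mul, abs_inv, abs_norm] at hwi
    rwa [le_inv_mul_iff₀ (norm_pos_iff.2 hu), mul_comm] at hwi

lemma norm_starProjection_span_singleton (x y : E) :
    ‖(ℝ ∙ x).starProjection y‖ = |⟪x, y⟫| / ‖x‖ := by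
  rcases eq_or_ne x 0 with rfl | hx
  · simp
  rw [Submodule.starProjection_singleton, norm_smul, norm_div]
  simp only [RCLike.ofReal_real_eq_id, id, norm_pow, Real.norm_eq_abs, abs_norm]
  field_simp

lemma HasGoodDirection.exists_finrank_eq_one [Nontrivial E] [FiniteDimensional ℝ E]
    (h : HasGoodDirection E m c) (u : Fin m → E) : ∃ S : Submodule ℝ E, finrank ℝ S = 1 ∧
      ∀ i, c * ‖u i‖ ≤ ‖(S.orthogonalProjectionOnto (u i) : E)‖ := by
  obtain ⟨x, hx1, hx⟩ := h.exists_mul_norm_le u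
  obtain ⟨y, hy0, hy⟩ : ∃ y : E, y ≠ 0 ∧ ∀ i, c * ‖u i‖ ≤ |⟪y, u i⟫| / ‖y‖ := by
    by_cases hx0 : x = 0
    · obtain ⟨y, hy⟩ := exists_ne (0 : E)
      refine ⟨y, hy, fun i => (?_ : c * ‖u i‖ ≤ 0).trans (by positivity)⟩
      simpa [hx0] using hx i
    · refine ⟨x, hx0, fun i => (hx i).trans ?_⟩
      rw [real_inner_comm]
      exact le_div_self (abs_nonneg _) (norm_pos_iff.2 hx0) hx1
  refine ⟨ℝ ∙ y, finrank_span_singleton hy0, fun i => ?_⟩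
  rw [Submodule.coe_orthogonalProjectionOnto_apply, norm_starProjection_span_singleton]
  exact hy i

end GoodDirection

lemma exists_mem_forall_notMem_of_sum_measure_lt {α ι : Type*} [MeasurableSpace α] [Fintype ι]
    {μ : Measure α} {s : Set α} (t : ι → Set α) (h : ∑ i, μ (t i) < μ s) :
    ∃ x ∈ s, ∀ i, x ∉ t i := by
  by_contra! hcover
  have hsub : s ⊆ ⋃ i, t i := fun x hx => mem_iUnion.2 (hcover x hx)
  exact (measure_mono hsub |>.trans (measure_iUnion_fintype_le μ t)).not_gt h

lemma AddCircle.exists_forall_le_dist {T : ℝ} [Fact (0 < T)] {m : ℕ} (p : Fin m → AddCircle T)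
    {β : ℝ} (h : 2 * m * β < T) : ∃ t : AddCircle T, ∀ i, β ≤ dist t (p i) := by
  have hsum : ∑ i, volume (ball (p i) β) < volume (univ : Set (AddCircle T)) := by
    calc ∑ i, volume (ball (p i) β)
        ≤ ∑ _i : Fin m, ENNReal.ofReal (2 * β) := Finset.sum_le_sum fun i _ =>
          (measure_mono ball_subset_closedBall).trans <| by
            rw [AddCircle.volume_closedBall]; exact ENNReal.ofReal_le_ofReal (min_le_right _ _)
      _ = ENNReal.ofReal (2 * m * β) := by
        rw [Finset.sum_const, Finset.card_univ, Fintype.card_fin, nsmul_eq_mul,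
          ← ENNReal.ofReal_natCast, ← ENNReal.ofReal_mul (Nat.cast_nonneg m)]
        ring_nf
      _ < volume univ := by
        rw [AddCircle.measure_univ]
        exact (ENNReal.ofReal_lt_ofReal_iff Fact.out).2 h
  obtain ⟨t, -, ht⟩ := exists_mem_forall_notMem_of_sum_measure_lt _ hsum
  exact ⟨t, fun i => not_lt.1 (ht i)⟩

lemma sin_le_abs_sin_of_le_norm {β s : ℝ} (hβ0 : 0 ≤ β) (hβ : β ≤ ‖(s : AddCircle π)‖) :
    sin β ≤ |sin s| := by
  set n := round (π⁻¹ * s)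
  have hnorm : ‖(s : AddCircle π)‖ = |s - n * π| := AddCircle.norm_eq π
  have hhalf : |s - n * π| ≤ π / 2 := by
    simpa [← hnorm, abs_of_pos pi_pos] using
      AddCircle.norm_le_half_period π (x := (s : AddCircle π)) pi_ne_zero
  have hsin : |sin s| = sin |s - n * π| := by
    have h := sin_add_int_mul_pi (s - n * π) n
    rw [sub_add_cancel] at h
    rw [← abs_sin_eq_sin_abs_of_abs_le_pi (by linarith [pi_pos]), h, abs_mul, abs_neg_one_zpow,
      one_mul]
  rw [hsin]
  rw [hnorm] at hβ
  exact sin_le_sin_of_le_of_le_pi_div_two (by linarith [pi_pos]) hhalf hβ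

lemma hasGoodDirection_fin_one (m : ℕ) : HasGoodDirection (EuclideanSpace ℝ (Fin 1)) m 1 := by
  refine fun w hw => ⟨EuclideanSpace.single 0 1, by simp, fun i => ?_⟩
  have hwi : |w i 0| = 1 := by
    rw [← hw i, EuclideanSpace.norm_eq, Fin.sum_univ_one, Real.norm_eq_abs, sq_abs,
      Real.sqrt_sq_eq_abs]
  simp [EuclideanSpace.inner_single_right, hwi]

lemma exists_inner_cos_sin_eq_sin_sub (w : EuclideanSpace ℝ (Fin 2)) (hw : ‖w‖ = 1) :
    ∃ ψ : ℝ, ∀ t, ⟪w, !₂[cos t, sin t]⟫ = sin (t - ψ) := by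
  set z : ℂ := ⟨w 0, w 1⟩
  have hz : ‖z‖ = 1 := by
    rw [← hw, EuclideanSpace.norm_eq, Fin.sum_univ_two, Complex.norm_def, Complex.normSq_apply]
    simp [z, sq]
  have hz0 : z ≠ 0 := norm_ne_zero_iff.1 (by rw [hz]; exact one_ne_zero)
  refine ⟨Complex.arg z - π / 2, fun t => ?_⟩
  rw [sub_sub_eq_add_sub, add_sub_right_comm, sin_add_pi_div_two, cos_sub,
    Complex.cos_arg hz0, Complex.sin_arg, hz]
  simp [PiLp.inner_apply, Fin.sum_univ_two, z]

lemma hasGoodDirection_fin_two {m : ℕ} {c : ℝ} (hc0 : 0 ≤ c) (hc1 : c ≤ 1)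
    (hm : 2 * m * arcsin c < π) : HasGoodDirection (EuclideanSpace ℝ (Fin 2)) m c := by
  intro w hw
  choose ψ hψ using fun i => exists_inner_cos_sin_eq_sin_sub (w i) (hw i)
  have : Fact (0 < π) := ⟨pi_pos⟩
  obtain ⟨t, ht⟩ := AddCircle.exists_forall_le_dist (fun i => ((ψ i : ℝ) : AddCircle π)) hm
  obtain ⟨t, rfl⟩ := QuotientAddGroup.mk_surjective t
  refine ⟨!₂[cos t, sin t], by simp [EuclideanSpace.norm_eq], fun i => ?_⟩
  rw [hψ, ← sin_arcsin (by linarith) hc1]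
  refine sin_le_abs_sin_of_le_norm (arcsin_nonneg.2 hc0) ?_
  simpa [dist_eq_norm] using ht i

namespace EuclideanSpace

def headTail (d : ℕ) (x : EuclideanSpace ℝ (Fin (d + 1))) : ℝ × EuclideanSpace ℝ (Fin d) :=
  (x 0, WithLp.toLp 2 fun j => x j.succ)

lemma measurePreserving_headTail (d : ℕ) : MeasurePreserving (headTail d) := by
  have h := ((MeasurePreserving.id volume).prod (PiLp.volume_preserving_toLp (Fin d))).comp
    ((volume_preserving_piFinSuccAbove (fun _ : Fin (d + 1) => ℝ) 0).comp
      (PiLp.volume_preserving_ofLp (Fin (d + 1))))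
  rw [← Measure.volume_eq_prod] at h
  convert h using 1
  funext x
  rfl

lemma norm_sq_eq_head_sq_add_norm_sq_tail {d : ℕ} (x : EuclideanSpace ℝ (Fin (d + 1))) :
    ‖x‖ ^ 2 = (headTail d x).1 ^ 2 + ‖(headTail d x).2‖ ^ 2 := by
  simp [headTail, EuclideanSpace.norm_sq_eq, Fin.sum_univ_succ]

end EuclideanSpace

lemma exists_orthonormalBasis_apply_zero_eq {E : Type*} [NormedAddCommGroup E]
    [InnerProductSpace ℝ E] [FiniteDimensional ℝ E] {d : ℕ} (hE : finrank ℝ E = d + 1) {w : E}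
    (hw : ‖w‖ = 1) : ∃ b : OrthonormalBasis (Fin (d + 1)) ℝ E, b 0 = w := by
  have horth : Orthonormal ℝ (({0} : Set (Fin (d + 1))).domRestrict fun _ => w) :=
    ⟨fun _ => hw, fun i j hij => absurd (Subsingleton.elim i j) hij⟩
  obtain ⟨b, hb⟩ := horth.exists_orthonormalBasis_extension_of_card_eq (by simpa using hE)
  exact ⟨b, hb 0 rfl⟩

section Volume

variable {E : Type*} [NormedAddCommGroup E] [InnerProductSpace ℝ E] [FiniteDimensional ℝ E]
  [MeasurableSpace E] [BorelSpace E] {d : ℕ}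

lemma volume_slab_le (hE : finrank ℝ E = d + 1) {w : E} (hw : ‖w‖ = 1) (c : ℝ) :
    volume {x ∈ closedBall (0 : E) 1 | |⟪w, x⟫| ≤ c} ≤
      ENNReal.ofReal (2 * c) * volume (closedBall (0 : EuclideanSpace ℝ (Fin d)) 1) := by
  obtain ⟨b, hb⟩ := exists_orthonormalBasis_apply_zero_eq hE hw
  have hf := (EuclideanSpace.measurePreserving_headTail d).comp b.measurePreserving_repr
  have hsub : {x ∈ closedBall (0 : E) 1 | |⟪w, x⟫| ≤ c} ⊆
      (EuclideanSpace.headTail d ∘ b.repr) ⁻¹' (Icc (-c) c ×ˢ closedBall 0 1) := by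
    rintro x ⟨hx1, hxc⟩
    have hsplit := EuclideanSpace.norm_sq_eq_head_sq_add_norm_sq_tail (b.repr x)
    rw [b.repr.norm_map] at hsplit
    rw [mem_closedBall_zero_iff] at hx1
    refine ⟨abs_le.1 ?_, mem_closedBall_zero_iff.2 ?_⟩
    · simpa [EuclideanSpace.headTail, b.repr_apply_apply, hb] using hxc
    · change ‖(EuclideanSpace.headTail d (b.repr x)).2‖ ≤ 1
      nlinarith [norm_nonneg x, norm_nonneg (EuclideanSpace.headTail d (b.repr x)).2]
  calc _ ≤ _ := measure_mono hsub
    _ = volume (Icc (-c) c ×ˢ closedBall (0 : EuclideanSpace ℝ (Fin d)) 1) :=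
      hf.measure_preimage (measurableSet_Icc.prod measurableSet_closedBall).nullMeasurableSet
    _ = _ := by
      rw [Measure.volume_eq_prod, Measure.prod_prod, Real.volume_Icc]
      ring_nf

lemma hasGoodDirection_of_volume_lt (hE : finrank ℝ E = d + 1) {m : ℕ} {c : ℝ}
    (h : ENNReal.ofReal (2 * m * c) * volume (closedBall (0 : EuclideanSpace ℝ (Fin d)) 1) <
      volume (closedBall (0 : E) 1)) : HasGoodDirection E m c := by
  intro w hw
  have hsum : ∑ i, volume {x ∈ closedBall (0 : E) 1 | |⟪w i, x⟫| ≤ c} <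
      volume (closedBall (0 : E) 1) := by
    refine lt_of_le_of_lt ?_ h
    calc _ ≤ ∑ _i : Fin m, ENNReal.ofReal (2 * c) *
          volume (closedBall (0 : EuclideanSpace ℝ (Fin d)) 1) :=
        Finset.sum_le_sum fun i _ => volume_slab_le hE (hw i) c
      _ = _ := by
        rw [Finset.sum_const, Finset.card_univ, Fintype.card_fin, nsmul_eq_mul, ← mul_assoc,
          ← ENNReal.ofReal_natCast, ← ENNReal.ofReal_mul (Nat.cast_nonneg m)]
        ring_nf
  obtain ⟨x, hx, hxi⟩ := exists_mem_forall_notMem_of_sum_measure_lt _ hsum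
  exact ⟨x, mem_closedBall_zero_iff.1 hx, fun i => le_of_lt (not_le.1 fun h => hxi i ⟨hx, h⟩)⟩

end Volume

lemma Real.Gamma_add_half_le {s : ℝ} (hs : 0 < s) : Gamma (s + 1 / 2) ≤ √s * Gamma s := by
  have h := Gamma_mul_add_mul_le_rpow_Gamma_mul_rpow_Gamma hs (by linarith : 0 < s + 1)
    (by norm_num : (0 : ℝ) < 1 / 2) (by norm_num : (0 : ℝ) < 1 / 2) (by norm_num)
  have hΓ := Gamma_pos_of_pos hs
  rw [Gamma_add_one hs.ne', mul_rpow hs.le hΓ.le, mul_left_comm, ← rpow_add hΓ] at h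
  convert h using 1
  · ring_nf
  · rw [sqrt_eq_rpow]; norm_num

lemma volume_closedBall_succ_ge {d : ℕ} (hd : 0 < d) :
    ENNReal.ofReal √(2 * π / (d + 2)) * volume (closedBall (0 : EuclideanSpace ℝ (Fin d)) 1) ≤
      volume (closedBall (0 : EuclideanSpace ℝ (Fin (d + 1))) 1) := by
  have : Nonempty (Fin d) := Fin.pos_iff_nonempty.1 hd
  rw [EuclideanSpace.volume_closedBall, EuclideanSpace.volume_closedBall]
  simp only [Fintype.card_fin, ENNReal.ofReal_one, one_pow, one_mul]
  rw [← ENNReal.ofReal_mul (sqrt_nonneg _)]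
  refine ENNReal.ofReal_le_ofReal ?_
  set s : ℝ := d / 2 + 1 with hs_def
  have hs : 0 < s := by positivity
  have hd : ((d + 1 : ℕ) : ℝ) / 2 + 1 = s + 1 / 2 := by push_cast; ring
  have hπs : 2 * π / (d + 2) = π / s := by rw [hs_def]; field_simp
  rw [hd, hπs, sqrt_div' _ hs.le, div_mul_div_comm, pow_succ, mul_comm (√π ^ d)]
  exact div_le_div_of_nonneg_left (by positivity) (Gamma_pos_of_pos (by positivity))
    (Real.Gamma_add_half_le hs)

lemma natCast_add_two_mul_four_ninths_pow_lt {d : ℕ} (hd : 3 ≤ d) :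
    ((d : ℝ) + 2) * (4 / 9) ^ d < 1 / 2 := by
  induction d, hd using Nat.le_induction with
  | base => norm_num
  | succ d hd ih =>
    have hx : (0 : ℝ) < (4 / 9) ^ d := by positivity
    have hd' : (3 : ℝ) ≤ d := by exact_mod_cast hd
    push_cast
    rw [pow_succ]
    nlinarith

lemma pi_mul_two_div_pi_pow_lt_sqrt {d : ℕ} (hd : 3 ≤ d) :
    π * (2 / π) ^ d < √(2 * π / (d + 2)) := by
  have h23 : π * (2 / π) ^ d ≤ π * (2 / 3) ^ d := by
    gcongr
    exact pi_gt_three.le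
  refine h23.trans_lt (lt_sqrt (by positivity) |>.2 ?_)
  have key := natCast_add_two_mul_four_ninths_pow_lt hd
  rw [lt_div_iff₀ (by positivity), mul_pow, ← pow_mul, mul_comm d 2, pow_mul,
    show ((2 : ℝ) / 3) ^ 2 = 4 / 9 by norm_num]
  nlinarith [pi_pos, pi_lt_four, (by positivity : (0 : ℝ) < (4 / 9) ^ d)]

lemma ofReal_mul_volume_closedBall_lt {d : ℕ} (hd : 2 ≤ d) :
    ENNReal.ofReal (π * (2 / π) ^ d) * volume (closedBall (0 : EuclideanSpace ℝ (Fin d)) 1) <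
      volume (closedBall (0 : EuclideanSpace ℝ (Fin (d + 1))) 1) := by
  obtain rfl | hd := hd.eq_or_lt
  -- for `d = 2` the general bound `√(π/2)` is below `4/π`, but the exact ratio is `4/3`
  · simp only [EuclideanSpace.volume_closedBall_fin_two, Nat.reduceAdd,
      EuclideanSpace.volume_closedBall_fin_three, ENNReal.ofReal_one, one_pow, one_mul]
    rw [← ENNReal.ofReal_mul (by positivity)]
    refine (ENNReal.ofReal_lt_ofReal_iff (by positivity)).2 ?_
    field_simp
    nlinarith [pi_gt_three]
  · refine lt_of_lt_of_le ?_ (volume_closedBall_succ_ge (by omega))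
    exact ENNReal.mul_lt_mul_left (measure_closedBall_pos volume 0 one_pos).ne'
      measure_closedBall_lt_top.ne
      ((ENNReal.ofReal_lt_ofReal_iff (by positivity)).2 (pi_mul_two_div_pi_pow_lt_sqrt hd))

lemma inv_pow_mul_rpow_xiSum_le_one (d : ℕ) {N : ℝ} (hN : 2 ≤ N) :
    ((π / 2) ^ d)⁻¹ * (π / N) ^ xiSum d ≤ 1 := by
  have hξ : 0 ≤ xiSum d := by unfold xiSum; positivity
  rw [inv_mul_le_one₀ (by positivity), ← rpow_natCast]
  calc (π / N) ^ xiSum d ≤ (π / 2) ^ xiSum d := by gcongr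
    _ ≤ (π / 2) ^ (d : ℝ) :=
      rpow_le_rpow_of_exponent_le (by linarith [pi_gt_three]) (xiSum_le d)

lemma mul_arcsin_two_div_lt_pi {N : ℝ} (hN : 2 < N) : N * arcsin (2 / N) < π := by
  have hN0 : 0 < N := by linarith
  have hπN : π / N < π / 2 := div_lt_div_of_pos_left pi_pos two_pos hN
  -- Jordan's inequality `2 / π * x < sin x` at `x = π / N`
  have hsin : 2 / N < sin (π / N) := by
    simpa [div_mul_div_cancel₀ pi_ne_zero] using mul_lt_sin (by positivity) hπN
  have harcsin : arcsin (2 / N) < π / N :=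
    (arcsin_lt_iff_lt_sin' ⟨by linarith [div_pos pi_pos hN0, pi_pos], hπN.le⟩).2 hsin
  calc N * arcsin (2 / N) < N * (π / N) := mul_lt_mul_of_pos_left harcsin hN0
    _ = π := by field_simp

lemma mul_inv_pow_mul_rpow_xiSum_le {d : ℕ} (hd : 1 ≤ d) {N : ℝ} (hN : π ≤ N) :
    N * (((π / 2) ^ d)⁻¹ * (π / N) ^ xiSum d) ≤ π * (2 / π) ^ d := by
  have hN0 : 0 < N := pi_pos.trans_le hN
  have hξ : (π / N) ^ xiSum d ≤ π / N := by
    simpa using rpow_le_rpow_of_exponent_ge (by positivity) (div_le_one_of_le₀ hN hN0.le)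
      (one_le_xiSum hd)
  calc N * (((π / 2) ^ d)⁻¹ * (π / N) ^ xiSum d) ≤ N * (((π / 2) ^ d)⁻¹ * (π / N)) := by
        gcongr
    _ = π * (2 / π) ^ d := by
      rw [← inv_pow, inv_div]
      field_simp

lemma hasGoodDirection_euclideanSpace (d m : ℕ) {N : ℝ} (hN : 2 ≤ N) (hm : 2 * m ≤ N) :
    HasGoodDirection (EuclideanSpace ℝ (Fin (d + 1))) m (((π / 2) ^ d)⁻¹ * (π / N) ^ xiSum d) := by
  rcases le_or_gt m 1 with hm1 | hm2
  · exact (hasGoodDirection_one_of_le_one hm1).mono (inv_pow_mul_rpow_xiSum_le_one d hN)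
  have hN4 : 4 ≤ N := by
    have : (2 : ℝ) ≤ m := by exact_mod_cast hm2
    linarith
  have hcN : ∀ c, 0 ≤ c → 2 * m * c ≤ N * c := fun c hc => mul_le_mul_of_nonneg_right hm hc
  rcases d with _ | _ | d
  · simpa [xiSum_zero] using hasGoodDirection_fin_one m
  · have hc : ((π / 2) ^ 1)⁻¹ * (π / N) ^ xiSum 1 = 2 / N := by
      rw [xiSum_one, rpow_one]
      field_simp
    rw [hc]
    refine hasGoodDirection_fin_two (by positivity) (by rw [div_le_one (by linarith)]; linarith)
      ((hcN _ (arcsin_nonneg.2 (by positivity))).trans_lt (mul_arcsin_two_div_lt_pi (by linarith)))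
  · refine hasGoodDirection_of_volume_lt finrank_euclideanSpace_fin
      (lt_of_le_of_lt ?_ (ofReal_mul_volume_closedBall_lt (d := d + 2) (by omega)))
    gcongr ENNReal.ofReal ?_ * _
    exact (hcN _ (by positivity)).trans
      (mul_inv_pow_mul_rpow_xiSum_le (by omega) (by linarith [pi_lt_four]))

/-- Lemma 8.4: a common good one-dimensional projection direction for at most
`n(n−1)/2` vectors of `ℝ^k`. -/
theorem common_good_one_dimensional_projection
    (n k m : ℕ) (hn : 2 ≤ n) (hk : 1 ≤ k) (hm : 2 * m ≤ n * (n - 1))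
    (u : Fin m → EuclideanSpace ℝ (Fin k)) :
    ∃ S : Submodule ℝ (EuclideanSpace ℝ (Fin k)),
      Module.finrank ℝ S = 1 ∧
      ∀ i, ‖u i‖ / (Real.pi / 2) ^ (k - 1) *
          (Real.pi / ((n : ℝ) * ((n : ℝ) - 1))) ^ xiSum (k - 1) ≤
        ‖(S.orthogonalProjection (u i) : EuclideanSpace ℝ (Fin k))‖ := by
  obtain ⟨d, rfl⟩ : ∃ d, k = d + 1 := ⟨k - 1, by omega⟩
  have hN : (2 : ℝ) ≤ n * ((n : ℝ) - 1) := by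
    have : (2 : ℝ) ≤ n := by exact_mod_cast hn
    nlinarith
  have hmN : 2 * (m : ℝ) ≤ n * ((n : ℝ) - 1) := by
    have := (Nat.cast_le (α := ℝ)).2 hm
    push_cast [Nat.cast_sub (by omega : 1 ≤ n)] at this
    exact this
  obtain ⟨S, hS, hSu⟩ := (hasGoodDirection_euclideanSpace d m hN hmN).exists_finrank_eq_one u
  refine ⟨S, hS, fun i => le_of_eq_of_le ?_ (hSu i)⟩
  rw [Nat.add_sub_cancel]
  ring
end
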